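/- arXiv:math/0510431 — 6 statements merged into one kernel-verified Lean document; each statement's English description precedes it below -/
import Mathlib

section
/- Let p be a prime and let k, m be nonnegative integers with k < p^m. Then for every nonnegative integer n one has C(n + p^m, k) ≡ C(n, k) (mod p), where C denotes the binomial coefficient; that is, the value of C(n,k) modulo p is periodic in n with period the smallest power of p exceeding k. -/
theorem Nat.Prime.cast_choose_pow_eq_zero {p : ℕ} (hp : p.Prime) {m j : ℕ} (hj₀ : j ≠ 0)
    (hj : j < p ^ m) : ((p ^ m).choose j : ZMod p) = 0 :=
  (ZMod.natCast_eq_zero_iff _ _).mpr (hp.dvd_choose_pow hj₀ hj.ne)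

/-- If `p` is a prime and `k < p^m`, then for every `n` one has
`C(n + p^m, k) ≡ C(n, k) (mod p)`: the binomial coefficient modulo `p` is periodic in
its upper entry with period the smallest power of `p` exceeding `k`. -/
theorem stmt_1 (p : ℕ) (hp : p.Prime) (k m : ℕ) (hk : k < p ^ m) (n : ℕ) :
    (n + p ^ m).choose k ≡ n.choose k [MOD p] := by
  -- In Vandermonde's sum over `i + j = k`, every term with `j ≠ 0` has `0 < j < p^m`,
  -- so its factor `C(p^m, j)` vanishes mod `p`.
  rw [← ZMod.natCast_eq_natCast_iff, Nat.add_choose_eq, Nat.cast_sum,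
    Finset.sum_eq_single_of_mem (k, 0) (by simp)]
  · simp
  · rintro ⟨i, j⟩ hij hne
    have hjk : i + j = k := Finset.HasAntidiagonal.mem_antidiagonal.mp hij
    have hj₀ : j ≠ 0 := by
      rintro rfl
      exact hne (by simp_all)
    simp [hp.cast_choose_pow_eq_zero (m := m) hj₀ (by omega)]
end

section
/- Let p be a prime, 0 ≤ a < b < n integers, and L = AF(a,b,n,p). Let D be an F_{p^n}-linear derivation of L. (i) If D e_ξ ∈ F_{p^n}·e_ξ for every ξ ∈ F_{p^n}, ξ ≠ 0, then there exists an additive map π: F_{p^n} → F_{p^n} such that D e_ξ = π(ξ)·e_ξ for all ξ ≠ 0; conversely, for every additive map π the linear map e_ξ ↦ π(ξ)·e_ξ is a derivation of L. (ii) If τ ∈ F_{p^n} with τ ≠ 0 and D e_ξ ∈ F_{p^n}·e_{ξ+τ} for every ξ ≠ 0 (where e_0 = 0), then D is a scalar multiple of the inner derivation ad(e_τ). -/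
/-
Write `D e_ξ = g ξ • e_{ξ+τ}`. The Leibniz rule on `⁅e_u, e_v⁆` becomes a functional equation
for `g` involving only the structure constants
`f u v = u ^ p ^ a * v ^ p ^ b - u ^ p ^ b * v ^ p ^ a`. This form is biadditive and alternating,
it is nondegenerate because `0 < b - a < n`, and orthogonality to a nonzero vector is transitive
(`f x y = 0` means `(x / y) ^ p ^ a = (x / y) ^ p ^ b`). For `τ = 0` the equation makes `g`
additive on non-orthogonal pairs, and orthogonal pairs are handled through a third element.
For `τ ≠ 0`, eliminating `g (ξ + η)` between the equations at `(ξ, η)`, `(ξ + η, -η)` and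
`(ξ + η, -ξ)` shows that `g ξ / f τ ξ` is constant where `f τ ξ ≠ 0`, while `g` vanishes
elsewhere; so `D = c • ad e_τ`.
-/

theorem AddMonoidHom.apply_swap_of_apply_self {M N : Type*} [AddCommGroup M] [AddCommGroup N]
    {f : M →+ M →+ N} (hf : ∀ x, f x x = 0) (x y : M) : f y x = -f x y := by
  have h := hf (x + y)
  simp only [map_add, AddMonoidHom.add_apply, hf, zero_add, add_zero] at h
  exact eq_neg_of_add_eq_zero_left h

theorem AddMonoidHom.add_ne_zero_of_apply_ne_zero {M N : Type*} [AddCommGroup M] [AddCommGroup N]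
    {f : M →+ M →+ N} (hf : ∀ x, f x x = 0) {τ x : M} (hx : f τ x ≠ 0) : x + τ ≠ 0 := by
  intro h
  rw [eq_neg_of_add_eq_zero_left h, map_neg, hf, neg_zero] at hx
  exact hx rfl

-- The properties of the Albert–Frank structure constants on which the computation of
-- derivations rests.
structure IsAlbertFrankForm {K : Type*} [Field K] (f : K →+ K →+ K) : Prop where
  apply_self : ∀ x, f x x = 0
  exists_apply_ne_zero : ∀ x, x ≠ 0 → ∃ y, f x y ≠ 0
  apply_eq_zero_trans : ∀ {x y z}, y ≠ 0 → f x y = 0 → f y z = 0 → f x z = 0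

section AlbertFrankForm

variable (K : Type*) [Field K] (p : ℕ) [ExpChar K p]

def afForm (a b : ℕ) : K →+ K →+ K :=
  (AddMonoidHom.mul.comp (iterateFrobenius K p a : K →+ K)).compl₂ (iterateFrobenius K p b) -
    (AddMonoidHom.mul.comp (iterateFrobenius K p b : K →+ K)).compl₂ (iterateFrobenius K p a)

variable {K p}

@[simp]
theorem afForm_apply (a b : ℕ) (x y : K) :
    afForm K p a b x y = x ^ p ^ a * y ^ p ^ b - x ^ p ^ b * y ^ p ^ a := by
  simp [afForm, iterateFrobenius_def]

theorem afForm_apply_self (a b : ℕ) (x : K) : afForm K p a b x x = 0 := by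
  rw [afForm_apply]; ring

theorem afForm_apply_eq_zero_trans (a b : ℕ) {x y z : K} (hy : y ≠ 0)
    (hxy : afForm K p a b x y = 0) (hyz : afForm K p a b y z = 0) :
    afForm K p a b x z = 0 := by
  rw [afForm_apply] at *
  have key : (y ^ p ^ a * y ^ p ^ b) * (x ^ p ^ a * z ^ p ^ b - x ^ p ^ b * z ^ p ^ a) = 0 := by
    linear_combination (z ^ p ^ b * y ^ p ^ a) * hxy + (x ^ p ^ b * y ^ p ^ a) * hyz
  exact (mul_eq_zero.mp key).resolve_left (by positivity)

open Polynomial in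
-- If `f x y = 0` for all `y`, with `x ≠ 0`, then every element is fixed by the `(b - a)`-th power
-- of Frobenius, i.e. is a root of `X ^ p ^ (b - a) - X`; there are fewer than `p ^ n` of those.
theorem afForm_exists_apply_ne_zero [Fintype K] {a b n : ℕ} (hp : p.Prime) (hab : a < b)
    (hbn : b < n) (hK : Fintype.card K = p ^ n) {x : K} (hx : x ≠ 0) :
    ∃ y, afForm K p a b x y ≠ 0 := by
  by_contra! h
  simp only [afForm_apply, sub_eq_zero] at h
  have hx1 : x ^ p ^ a = x ^ p ^ b := by simpa using h 1
  have hfix : ∀ y : K, y ^ p ^ (b - a) = y := by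
    intro y
    apply (iterateFrobenius K p a).injective
    have hy : x ^ p ^ a * y ^ p ^ b = x ^ p ^ a * y ^ p ^ a := by rw [h y, hx1]
    rw [iterateFrobenius_def, iterateFrobenius_def, ← pow_mul, ← pow_add, Nat.sub_add_cancel hab.le]
    exact mul_left_cancel₀ (pow_ne_zero _ hx) hy
  have hm : 1 < p ^ (b - a) := Nat.one_lt_pow (by omega) hp.one_lt
  have hcard : Fintype.card K ≤ p ^ (b - a) := by
    rw [← FiniteField.X_pow_card_sub_X_natDegree_eq K hm]
    refine card_le_degree_of_subset_roots fun y _ => ?_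
    rw [mem_roots (FiniteField.X_pow_card_sub_X_ne_zero K hm)]
    simp [hfix]
  rw [hK] at hcard
  have := (Nat.pow_le_pow_iff_right hp.one_lt).mp hcard
  omega

theorem isAlbertFrankForm_afForm [Fintype K] {a b n : ℕ} (hp : p.Prime) (hab : a < b)
    (hbn : b < n) (hK : Fintype.card K = p ^ n) : IsAlbertFrankForm (afForm K p a b) where
  apply_self := afForm_apply_self a b
  exists_apply_ne_zero _ hx := afForm_exists_apply_ne_zero hp hab hbn hK hx
  apply_eq_zero_trans := afForm_apply_eq_zero_trans a b

end AlbertFrankForm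

section

variable {K : Type*} [Field K]

-- `e_ξ ↦ g ξ • e_{ξ + τ}` satisfies the Leibniz rule on `⁅e_u, e_v⁆` exactly when this holds.
def IsShiftedLeibniz (f : K →+ K →+ K) (τ : K) (g : K → K) : Prop :=
  ∀ u v, u + v + τ ≠ 0 → f u v * g (u + v) = g u * (f u v + f τ v) + g v * (f u v - f τ u)

namespace IsShiftedLeibniz

variable {f : K →+ K →+ K} {τ : K} {g : K → K}

theorem map_add_of_apply_ne_zero (hf : ∀ x, f x x = 0) (hS : IsShiftedLeibniz f 0 g) {ξ η : K}
    (h : f ξ η ≠ 0) : g (ξ + η) = g ξ + g η := by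
  have hs : ξ + η + 0 ≠ 0 := by
    intro h0
    rw [add_zero, add_eq_zero_iff_eq_neg'] at h0
    simp [h0, hf] at h
  have e := hS ξ η hs
  simp only [map_zero, AddMonoidHom.zero_apply, add_zero, sub_zero] at e
  exact mul_left_cancel₀ h (by linear_combination e)

theorem map_add (hf : IsAlbertFrankForm f) (hS : IsShiftedLeibniz f 0 g) (hg : g 0 = 0)
    (ξ η : K) : g (ξ + η) = g ξ + g η := by
  have hadd : ∀ {x y}, f x y ≠ 0 → g (x + y) = g x + g y :=
    hS.map_add_of_apply_ne_zero hf.apply_self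
  by_cases hξ : ξ = 0
  · simp [hξ, hg]
  by_cases hη : η = 0
  · simp [hη, hg]
  by_cases hξη : f ξ η ≠ 0
  · exact hadd hξη
  rw [not_not] at hξη
  -- Go around `ξ ⊥ η` through an element `ζ` not orthogonal to `ξ`.
  obtain ⟨ζ, hζ⟩ := hf.exists_apply_ne_zero ξ hξ
  have hηζ : f η ζ ≠ 0 := fun h => hζ (hf.apply_eq_zero_trans hη hξη h)
  have h₁ : g (ξ + ζ) = g ξ + g ζ := hadd hζ
  have h₂ : g (ξ + ζ + η) = g (ξ + ζ) + g η := hadd <| by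
    rw [_root_.map_add, AddMonoidHom.add_apply, hξη, zero_add,
      AddMonoidHom.apply_swap_of_apply_self hf.apply_self]
    exact neg_ne_zero.mpr hηζ
  have h₃ : g (ξ + η + ζ) = g (ξ + η) + g ζ := by
    by_cases hs : ξ + η = 0
    · simp [hs, hg]
    refine hadd fun h => hζ (hf.apply_eq_zero_trans hs ?_ h)
    rw [_root_.map_add, hf.apply_self, hξη, add_zero]
  rw [add_right_comm] at h₃
  linear_combination h₂ + h₁ - h₃

theorem apply_sub_eq (hf : ∀ x, f x x = 0) (hS : IsShiftedLeibniz f τ g) {ζ : K}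
    (hζ : f τ ζ ≠ 0) : g (ζ - τ) = g ζ := by
  have hζ0 : ζ ≠ 0 := by rintro rfl; simp at hζ
  have e := hS ζ (-τ) (by simpa using hζ0)
  simp only [map_neg, hf, neg_zero, AddMonoidHom.apply_swap_of_apply_self hf τ ζ, neg_neg,
    add_zero, sub_self, mul_zero, ← sub_eq_add_neg] at e
  exact mul_left_cancel₀ hζ (by linear_combination e)

theorem apply_neg (hf : ∀ x, f x x = 0) (hτ : τ ≠ 0) (hS : IsShiftedLeibniz f τ g) {ζ : K}
    (hζ : f τ ζ ≠ 0) : g (-ζ) = -g ζ := by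
  have e := hS ζ (-ζ) (by simpa using hτ)
  simp only [map_neg, hf, neg_zero, zero_mul, zero_add, zero_sub] at e
  exact mul_left_cancel₀ hζ (by linear_combination e)

theorem two_mul_apply_add_mul_eq_zero (hf : ∀ x, f x x = 0) (hτ : τ ≠ 0)
    (hS : IsShiftedLeibniz f τ g) {ξ η : K} (hξ : f τ ξ ≠ 0) (hη : f τ η ≠ 0)
    (hs : ξ + η + τ ≠ 0) :
    (2 * f ξ η + f τ η) * (g ξ * f τ η - g η * f τ ξ) = 0 := by
  have e₁ := hS ξ η hs
  have e₂ := hS (ξ + η) (-η) (by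
    rw [show ξ + η + -η + τ = ξ + τ by ring]
    exact AddMonoidHom.add_ne_zero_of_apply_ne_zero hf hξ)
  rw [show ξ + η + -η = ξ by ring, hS.apply_neg hf hτ hη] at e₂
  simp only [_root_.map_add, map_neg, AddMonoidHom.add_apply, hf, add_zero] at e₂
  linear_combination -(f ξ η + f τ η) * e₁ + f ξ η * e₂

theorem apply_add_apply_mul_eq_zero (hf : ∀ x, f x x = 0) (hτ : τ ≠ 0)
    (hS : IsShiftedLeibniz f τ g) {ξ η : K} (hξ : f τ ξ ≠ 0) (hη : f τ η ≠ 0)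
    (hs : ξ + η + τ ≠ 0) :
    (f τ ξ + f τ η) * (g ξ * f τ η - g η * f τ ξ) = 0 := by
  have k₁ := hS.two_mul_apply_add_mul_eq_zero hf hτ hξ hη hs
  have k₂ := hS.two_mul_apply_add_mul_eq_zero hf hτ hη hξ (by rwa [add_comm η])
  rw [AddMonoidHom.apply_swap_of_apply_self hf ξ η] at k₂
  linear_combination k₁ - k₂

theorem mul_apply_eq_mul_apply (hf : ∀ x, f x x = 0) (hτ : τ ≠ 0)
    (hS : IsShiftedLeibniz f τ g) {ξ η : K} (hξ : f τ ξ ≠ 0) (hη : f τ η ≠ 0) :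
    g ξ * f τ η = g η * f τ ξ := by
  have hξ' : f τ (-ξ) ≠ 0 := by simpa using hξ
  by_cases hs : ξ + η + τ = 0
  · obtain rfl : η = -ξ - τ := by linear_combination hs
    rw [hS.apply_sub_eq hf hξ', hS.apply_neg hf hτ hξ]
    simp [hf]
  by_cases h2 : (2 : K) = 0
  · have k := hS.two_mul_apply_add_mul_eq_zero hf hτ hξ hη hs
    rw [h2, zero_mul, zero_add] at k
    linear_combination (mul_eq_zero.mp k).resolve_left hη
  by_cases hsum : f τ ξ + f τ η = 0
  -- Then `f τ (η - ξ) = 2 * f τ η ≠ 0`, so compare `η` with `-ξ` instead.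
  · have hne : f τ η + f τ (-ξ) ≠ 0 := by
      rw [map_neg, ← sub_eq_add_neg, show f τ η = -f τ ξ by linear_combination hsum]
      simpa [← two_mul, ← neg_add'] using And.intro h2 hξ
    have k := hS.apply_add_apply_mul_eq_zero hf hτ hη hξ'
      (AddMonoidHom.add_ne_zero_of_apply_ne_zero hf (by rwa [_root_.map_add]))
    rw [hS.apply_neg hf hτ hξ] at k
    simp only [map_neg] at k hne
    linear_combination (mul_eq_zero.mp k).resolve_left hne
  · have k := hS.apply_add_apply_mul_eq_zero hf hτ hξ hη hs
    linear_combination (mul_eq_zero.mp k).resolve_left hsum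

theorem apply_eq_zero (hf : IsAlbertFrankForm f) (hτ : τ ≠ 0) (hS : IsShiftedLeibniz f τ g)
    {ξ ζ : K} (hξ : f τ ξ = 0) (hξτ : ξ + τ ≠ 0) (hζ : f τ ζ ≠ 0) : g ξ = 0 := by
  have hξζ : f τ (ξ + ζ) ≠ 0 := by rwa [_root_.map_add, hξ, zero_add]
  have hg : g (ξ + ζ) = g ζ := by
    have h := hS.mul_apply_eq_mul_apply hf.apply_self hτ hξζ hζ
    rw [_root_.map_add, hξ, zero_add] at h
    exact mul_right_cancel₀ hζ h
  have e := hS ξ ζ (by simpa [add_right_comm] using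
    AddMonoidHom.add_ne_zero_of_apply_ne_zero hf.apply_self hξζ)
  rw [hg, hξ, sub_zero] at e
  have hne : f ξ ζ + f τ ζ ≠ 0 := by
    rw [← AddMonoidHom.add_apply, ← _root_.map_add]
    refine fun h => hζ (hf.apply_eq_zero_trans hξτ ?_ h)
    rw [_root_.map_add, hξ, hf.apply_self, zero_add]
  exact (mul_eq_zero.mp (by linear_combination -e : g ξ * (f ξ ζ + f τ ζ) = 0)).resolve_right hne

theorem exists_eq_mul_apply (hf : IsAlbertFrankForm f) (hτ : τ ≠ 0)
    (hS : IsShiftedLeibniz f τ g) (hg : g (-τ) = 0) : ∃ c, ∀ ξ, g ξ = c * f τ ξ := by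
  obtain ⟨ζ, hζ⟩ := hf.exists_apply_ne_zero τ hτ
  refine ⟨g ζ / f τ ζ, fun ξ => ?_⟩
  by_cases hξ : f τ ξ = 0
  · rw [hξ, mul_zero]
    by_cases hξτ : ξ + τ = 0
    · rwa [eq_neg_of_add_eq_zero_left hξτ]
    · exact hS.apply_eq_zero hf hτ hξ hξτ hζ
  · rw [div_mul_eq_mul_div, eq_div_iff hζ]
    exact hS.mul_apply_eq_mul_apply hf.apply_self hτ hξ hζ

end IsShiftedLeibniz

section LieAlgebra

variable {L : Type*} [LieRing L] [LieAlgebra K L]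

theorem LinearMap.apply_lie_eq_sub_of_basis {ι : Type*} (B : Module.Basis ι K L) (D : L →ₗ[K] L)
    (h : ∀ i j, D ⁅B i, B j⁆ = ⁅B i, D (B j)⁆ - ⁅B j, D (B i)⁆) (u v : L) :
    D ⁅u, v⁆ = ⁅u, D v⁆ - ⁅v, D u⁆ := by
  let ad : L →ₗ[K] L →ₗ[K] L := LieAlgebra.ad K L
  have hext : ad.compr₂ D = ad.compl₂ D - ad.flip ∘ₗ D :=
    LinearMap.ext_basis B B fun i j => by simpa [ad] using h i j
  simpa [ad] using LinearMap.congr_fun₂ hext u v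

variable {f : K →+ K →+ K} {E : K → L}

theorem exists_apply_eq_smul (hE0 : E 0 = 0) (D : L →ₗ[K] L) {τ : K}
    (hD : ∀ ξ, ξ ≠ 0 → ∃ c : K, D (E ξ) = c • E (ξ + τ)) :
    ∃ g : K → K, g (-τ) = 0 ∧ ∀ ξ, D (E ξ) = g ξ • E (ξ + τ) := by
  classical
  have hD' : ∀ ξ, ∃ c : K, D (E ξ) = c • E (ξ + τ) := fun ξ => by
    by_cases hξ : ξ = 0
    · exact ⟨0, by simp [hξ, hE0]⟩
    · exact hD ξ hξ
  choose g hg using hD'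
  refine ⟨Function.update g (-τ) 0, by simp, fun ξ => ?_⟩
  by_cases hξ : ξ = -τ
  · simp [hξ, hg, hE0]
  · rw [Function.update_of_ne hξ, hg]

theorem isShiftedLeibniz_of_lieDerivation (hf : ∀ x, f x x = 0)
    (hE : ∀ ξ, ξ ≠ 0 → E ξ ≠ 0) (hbr : ∀ ξ η, ⁅E ξ, E η⁆ = f ξ η • E (ξ + η))
    (D : LieDerivation K L L) {τ : K} {g : K → K} (hg : ∀ ξ, D (E ξ) = g ξ • E (ξ + τ)) :
    IsShiftedLeibniz f τ g := by
  intro u v huv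
  apply smul_left_injective K (hE _ huv)
  calc (f u v * g (u + v)) • E (u + v + τ) = D ⁅E u, E v⁆ := by
        rw [hbr, map_smul, hg, smul_smul]
    _ = (g u * (f u v + f τ v) + g v * (f u v - f τ u)) • E (u + v + τ) := by
        rw [D.apply_lie_eq_add, hg, hg, lie_smul, smul_lie, hbr, hbr, smul_smul, smul_smul,
          ← add_assoc, add_right_comm u τ v, ← add_smul, _root_.map_add, _root_.map_add,
          AddMonoidHom.add_apply, AddMonoidHom.apply_swap_of_apply_self hf τ u]
        congr 1
        ring

theorem exists_lieDerivation_apply_eq_smul (B : Module.Basis {ξ : K // ξ ≠ 0} K L)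
    (hB : ∀ ξ, B ξ = E ξ.1) (hE0 : E 0 = 0) (hf : ∀ x, f x x = 0)
    (hbr : ∀ ξ η, ⁅E ξ, E η⁆ = f ξ η • E (ξ + η)) (π : K →+ K) :
    ∃ D : LieDerivation K L L, ∀ ξ, D (E ξ) = π ξ • E ξ := by
  let D := B.constr K fun ξ => π ξ.1 • E ξ.1
  have hD : ∀ ξ, D (E ξ) = π ξ • E ξ := fun ξ => by
    by_cases hξ : ξ = 0
    · simp [hξ, hE0]
    · simpa [D, hB] using B.constr_basis K (fun ξ => π ξ.1 • E ξ.1) ⟨ξ, hξ⟩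
  refine ⟨⟨D, D.apply_lie_eq_sub_of_basis B fun i j => ?_⟩, hD⟩
  rw [hB, hB, hbr, map_smul, hD, hD, hD, lie_smul, lie_smul, hbr, hbr, add_comm j.1,
    AddMonoidHom.apply_swap_of_apply_self hf, map_add, smul_smul, smul_smul, smul_smul, ← sub_smul]
  congr 1
  ring

end LieAlgebra

end

/-- Derivations of the Albert–Frank algebra `L = AF(a,b,n,p)`.
(i) If a derivation `D` satisfies `D e_ξ ∈ K·e_ξ` for all `ξ ≠ 0`, then there is an
additive map `π : K → K` with `D e_ξ = π(ξ) • e_ξ` for all `ξ ≠ 0`; conversely, for any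
additive `π` the linear map `e_ξ ↦ π(ξ) • e_ξ` is a derivation.
(ii) If `τ ≠ 0` and `D e_ξ ∈ K·e_{ξ+τ}` for all `ξ ≠ 0`, then `D` is a scalar multiple of
the inner derivation `ad(e_τ)`. -/
theorem stmt_3 (p a b n : ℕ) (hp : p.Prime) (hab : a < b) (hbn : b < n)
    (K : Type*) [Field K] [Fintype K] (hK : Fintype.card K = p ^ n)
    (L : Type*) [LieRing L] [LieAlgebra K L]
    -- `E ξ` represents the basis element `e_ξ` (with `e_0 = 0`)
    (E : K → L) (hE0 : E 0 = 0)
    (B : Module.Basis {ξ : K // ξ ≠ 0} K L) (hB : ∀ ξ, B ξ = E ξ.1)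
    (hbr : ∀ ξ η : K,
      ⁅E ξ, E η⁆ = (ξ ^ p ^ a * η ^ p ^ b - ξ ^ p ^ b * η ^ p ^ a) • E (ξ + η)) :
    -- (i), forward direction
    ((∀ D : LieDerivation K L L, (∀ ξ : K, ξ ≠ 0 → ∃ c : K, D (E ξ) = c • E ξ) →
        ∃ π : K → K, (∀ ξ η : K, π (ξ + η) = π ξ + π η) ∧
          ∀ ξ : K, ξ ≠ 0 → D (E ξ) = π ξ • E ξ) ∧
      -- (i), converse direction
      (∀ π : K → K, (∀ ξ η : K, π (ξ + η) = π ξ + π η) →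
        ∃ D : LieDerivation K L L, ∀ ξ : K, D (E ξ) = π ξ • E ξ) ∧
      -- (ii)
      (∀ D : LieDerivation K L L, ∀ τ : K, τ ≠ 0 →
        (∀ ξ : K, ξ ≠ 0 → ∃ c : K, D (E ξ) = c • E (ξ + τ)) →
        ∃ c : K, ∀ u : L, D u = c • ⁅E τ, u⁆)) := by
  have := Fact.mk hp
  have := charP_of_card_eq_prime_pow (R := K) hK
  have hf := isAlbertFrankForm_afForm hp hab hbn hK
  have hbr' : ∀ ξ η, ⁅E ξ, E η⁆ = afForm K p a b ξ η • E (ξ + η) := by simpa using hbr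
  have hE : ∀ ξ, ξ ≠ 0 → E ξ ≠ 0 := fun ξ hξ => hB ⟨ξ, hξ⟩ ▸ B.ne_zero _
  have hS := isShiftedLeibniz_of_lieDerivation hf.apply_self hE hbr'
  refine ⟨fun D hD => ?_, fun π hπ => ?_, fun D τ hτ hD => ?_⟩
  · obtain ⟨π, hπ0, hπ⟩ := exists_apply_eq_smul hE0 (D : L →ₗ[K] L) (τ := 0) (by simpa using hD)
    rw [neg_zero] at hπ0
    exact ⟨π, (hS D hπ).map_add hf hπ0, fun ξ _ => by simpa using hπ ξ⟩
  · exact exists_lieDerivation_apply_eq_smul B hB hE0 hf.apply_self hbr' (AddMonoidHom.mk' π hπ)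
  · obtain ⟨g, hg0, hg⟩ := exists_apply_eq_smul hE0 (D : L →ₗ[K] L) hD
    obtain ⟨c, hc⟩ := (hS D hg).exists_eq_mul_apply hf hτ hg0
    have hDB : (D : L →ₗ[K] L) = c • LieAlgebra.ad K L (E τ) :=
      B.ext fun i => by simp [hB, hg, hc, hbr', add_comm τ, smul_smul]
    exact ⟨c, fun u => by simpa using LinearMap.congr_fun hDB u⟩
end

section
/- Let p be a prime, 0 ≤ a < b < n integers, and L = AF(a,b,n,p). Then the quotient of the F_{p^n}-vector space of all F_{p^n}-linear derivations of L by the subspace ad(L) of inner derivations has dimension n over F_{p^n}; a basis is given by the classes of the n derivations D_s (0 ≤ s < n) defined on the basis by D_s(e_ξ) = ξ^{p^s}·e_ξ. -/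
/-!
Write `D e_x = ∑_μ g_μ(x) e_{x+μ}` for a derivation `D`. The Leibniz rule on `[e_ξ, e_η]`
splits into one functional equation for each degree `μ` (`IsDerivationComponent`). In degree `0`
it forces `g_0` to be additive, i.e. `𝔽_p`-linear, hence a `K`-combination of the Frobenius powers
`x ↦ x ^ p ^ s`, `s < n` (Dedekind independence plus a dimension count). In degree `μ ≠ 0` it
forces `g_μ = t_μ c(μ, ·)`, where `c` is the structure constant; this is the degree-`μ` part of
`ad (t_μ e_μ)`. So every derivation is `∑ γ_s D_s + ad w`, and the `D_s` stay independent modulo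
`ad L` because inner derivations have no degree-`0` part.

The delicate point is characteristic `2`: there one needs that the kernel of `c(μ, ·)`, which is
`μ` times the subfield fixed by `x ↦ x ^ p ^ (b - a)`, is small, and this is a counting argument.
-/

open Finset Module Polynomial

namespace LieDerivation

variable {R L ι : Type*} [CommRing R] [LieRing L] [LieAlgebra R L]

def ofBasis (B : Basis ι R L) (D : L →ₗ[R] L)
    (h : ∀ i j, D ⁅B i, B j⁆ = ⁅D (B i), B j⁆ + ⁅B i, D (B j)⁆) : LieDerivation R L L where
  toLinearMap := D
  leibniz' u v := by
    let ad : L →ₗ[R] Module.End R L := LieAlgebra.ad R L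
    have : ad.compr₂ D = ad ∘ₗ D + ad.compl₂ D := LinearMap.ext_basis B B fun i j => h i j
    have := LinearMap.congr_fun₂ this u v
    simp only [ad, LinearMap.compr₂_apply, LinearMap.add_apply, LinearMap.comp_apply,
      LinearMap.compl₂_apply, LieHom.coe_toLinearMap, LieAlgebra.ad_apply] at this
    rw [this, ← lie_skew (D u) v]
    abel

@[simp] lemma ofBasis_apply (B : Basis ι R L) (D : L →ₗ[R] L) (h) (u : L) :
    ofBasis B D h u = D u :=
  rfl

end LieDerivation

namespace FiniteField

variable (F L : Type*) [Field F] [Fintype F] [Field L] [Finite L] [Algebra F L]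

noncomputable def frobeniusPowBasis : Basis (Fin (finrank F L)) L (L →ₗ[F] L) :=
  haveI : Nonempty (Fin (finrank F L)) := ⟨⟨0, finrank_pos⟩⟩
  basisOfLinearIndependentOfCardEqFinrank
    ((linearIndependent_algHom_toLinearMap F L L).comp _ (bijective_frobeniusAlgHom_pow F L).1)
    (by rw [Fintype.card_fin, finrank_linearMap_self])

lemma frobeniusPowBasis_apply (s : Fin (finrank F L)) (x : L) :
    frobeniusPowBasis F L s x = x ^ Fintype.card F ^ (s : ℕ) := by
  simp [frobeniusPowBasis, AlgHom.coe_pow, coe_frobeniusAlgHom, pow_iterate]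

section

variable {K : Type*} [Field K] [Fintype K] {p n : ℕ} [Fact p.Prime] [CharP K p]

noncomputable def frobeniusPowAddMonoidHomBasis (hK : Fintype.card K = p ^ n) :
    Basis (Fin n) K (K →+ K) :=
  letI := ZMod.algebra K p
  have hn : finrank (ZMod p) K = n := by
    have := Module.card_eq_pow_finrank (K := ZMod p) (V := K)
    rw [ZMod.card, hK] at this
    exact Nat.pow_right_injective (Fact.out : p.Prime).two_le this.symm
  ((frobeniusPowBasis (ZMod p) K).reindex (finCongr hn)).map
    { toFun := LinearMap.toAddMonoidHom
      invFun := AddMonoidHom.toZModLinearMap p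
      map_add' _ _ := rfl
      map_smul' _ _ := rfl
      left_inv _ := rfl
      right_inv _ := rfl }

lemma frobeniusPowAddMonoidHomBasis_apply (hK : Fintype.card K = p ^ n) (s : Fin n) (x : K) :
    frobeniusPowAddMonoidHomBasis hK s x = x ^ p ^ (s : ℕ) := by
  let := ZMod.algebra K p
  simp only [frobeniusPowAddMonoidHomBasis, Basis.map_apply, Basis.reindex_apply]
  exact (frobeniusPowBasis_apply (ZMod p) K _ x).trans (by simp)

end

lemma card_filter_pow_pow_eq_self_le {K : Type*} [Field K] [Fintype K] [DecidableEq K]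
    {q k : ℕ} (hq : 1 < q) (hk : k ≠ 0) : #{x : K | x ^ q ^ k = x} ≤ q ^ k := by
  have hX := X_pow_card_pow_sub_X_ne_zero K hk hq
  calc _ ≤ (X ^ q ^ k - X : K[X]).natDegree := card_le_degree_of_subset_roots fun x hx => by
        rw [mem_roots hX]
        simpa [sub_eq_zero] using (mem_filter.mp (mem_def.mpr hx)).2
    _ = q ^ k := X_pow_card_pow_sub_X_natDegree_eq K hk hq

end FiniteField

namespace AlbertFrank

section

variable {K : Type*} [Field K] (p a b : ℕ)

def coeff (x y : K) : K := x ^ p ^ a * y ^ p ^ b - x ^ p ^ b * y ^ p ^ a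

lemma coeff_self (x : K) : coeff p a b x x = 0 := by
  rw [coeff, mul_comm, sub_self]

lemma coeff_swap (x y : K) : coeff p a b y x = -coeff p a b x y := by
  simp only [coeff]; ring

/-- The equations that the Leibniz rule imposes on `g x :=` (coefficient of `e_{x+μ}` in `D e_x`)
for a derivation `D`. -/
structure IsDerivationComponent (μ : K) (g : K → K) : Prop where
  apply_zero : g 0 = 0
  apply_neg : g (-μ) = 0
  leibniz (ξ η : K) :
    coeff p a b ξ η * g (ξ + η) = g ξ * coeff p a b (ξ + μ) η + g η * coeff p a b ξ (η + μ)

variable [Fact p.Prime]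

lemma coeff_zero_left (y : K) : coeff p a b 0 y = 0 := by
  simp [coeff, (Fact.out : p.Prime).ne_zero]

lemma coeff_zero_right (x : K) : coeff p a b x 0 = 0 := by
  rw [coeff_swap, coeff_zero_left, neg_zero]

variable [CharP K p]

lemma coeff_add_left (x y z : K) :
    coeff p a b (x + y) z = coeff p a b x z + coeff p a b y z := by
  simp only [coeff, add_pow_char_pow]; ring

lemma coeff_add_right (x y z : K) :
    coeff p a b x (y + z) = coeff p a b x y + coeff p a b x z := by
  simp only [coeff, add_pow_char_pow]; ring

lemma coeff_neg_left (x y : K) : coeff p a b (-x) y = -coeff p a b x y := by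
  rw [eq_neg_iff_add_eq_zero, ← coeff_add_left, neg_add_cancel, coeff_zero_left]

lemma coeff_neg_right (x y : K) : coeff p a b x (-y) = -coeff p a b x y := by
  rw [coeff_swap, coeff_neg_left, coeff_swap p a b y x, neg_neg]

lemma coeff_sub_right (x y z : K) :
    coeff p a b x (y - z) = coeff p a b x y - coeff p a b x z := by
  rw [sub_eq_add_neg, coeff_add_right, coeff_neg_right, ← sub_eq_add_neg]

variable {p a b}

lemma coeff_eq_zero_iff (hab : a ≤ b) {x : K} (hx : x ≠ 0) (y : K) :
    coeff p a b x y = 0 ↔ (y / x) ^ p ^ (b - a) = y / x := by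
  have hy : y = y / x * x := (div_mul_cancel₀ y hx).symm
  have hb : ∀ s : K, s ^ p ^ b = (s ^ p ^ (b - a)) ^ p ^ a := fun s => by
    rw [← pow_mul, ← pow_add, Nat.sub_add_cancel hab]
  have : coeff p a b x y = (x ^ p ^ a * x ^ p ^ b) * ((y / x) ^ p ^ b - (y / x) ^ p ^ a) := by
    conv_lhs => rw [hy]
    simp only [coeff, mul_pow]; ring
  rw [this, mul_eq_zero, or_iff_right (by positivity), sub_eq_zero, hb]
  exact (iterateFrobenius_inj K p a).eq_iff

lemma coeff_eq_zero_trans (hab : a ≤ b) {x y z : K} (hx : x ≠ 0) (hy : y ≠ 0)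
    (hxy : coeff p a b x y = 0) (hyz : coeff p a b y z = 0) : coeff p a b x z = 0 := by
  rw [coeff_eq_zero_iff hab hx] at hxy ⊢
  rw [coeff_eq_zero_iff hab hy] at hyz
  rw [← div_mul_div_cancel₀ hy, mul_pow, hxy, hyz]

namespace IsDerivationComponent

variable {μ : K} {g : K → K}

lemma coeff_mul_sub (hg : IsDerivationComponent p a b μ g) (ξ η : K) :
    coeff p a b ξ η * (g (ξ + η) - g ξ - g η) = coeff p a b μ η * g ξ - coeff p a b μ ξ * g η := by
  have := hg.leibniz ξ η
  rw [coeff_add_left, coeff_add_right, coeff_swap p a b μ ξ] at this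
  linear_combination this

lemma apply_add_eq (hg : IsDerivationComponent p a b μ g) {x : K} (hx : coeff p a b μ x ≠ 0) :
    g (x + μ) = g x := by
  have := hg.coeff_mul_sub (-μ) (x + μ)
  rw [show -μ + (x + μ) = x by ring, hg.apply_neg, coeff_neg_left, coeff_neg_right,
    coeff_add_right, coeff_self] at this
  have : coeff p a b μ x * (g (x + μ) - g x) = 0 := by linear_combination this
  exact sub_eq_zero.mp ((mul_eq_zero.mp this).resolve_left hx)

lemma map_add_of_coeff_ne_zero (hg : IsDerivationComponent p a b μ g) {ξ η : K}
    (hξ : coeff p a b μ ξ ≠ 0) (hη : coeff p a b μ η ≠ 0) (hξη : coeff p a b μ (ξ + η) ≠ 0) :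
    g (ξ + η) = g ξ + g η := by
  have h₁ := hg.coeff_mul_sub ξ η
  have h₂ := hg.coeff_mul_sub ξ (η + μ)
  rw [← add_assoc, hg.apply_add_eq hξη, hg.apply_add_eq hη, coeff_add_right p a b μ η,
    coeff_self, add_zero, coeff_add_right, coeff_swap p a b μ ξ] at h₂
  have : coeff p a b μ ξ * (g (ξ + η) - g ξ - g η) = 0 := by linear_combination h₁ - h₂
  linear_combination (mul_eq_zero.mp this).resolve_left hξ

lemma coeff_mul_eq_of_coeff_add_ne_zero (hg : IsDerivationComponent p a b μ g) {ξ η : K}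
    (hξ : coeff p a b μ ξ ≠ 0) (hη : coeff p a b μ η ≠ 0) (hξη : coeff p a b μ (ξ + η) ≠ 0) :
    coeff p a b μ η * g ξ = coeff p a b μ ξ * g η := by
  have := hg.coeff_mul_sub ξ η
  rw [hg.map_add_of_coeff_ne_zero hξ hη hξη] at this
  linear_combination -this

end IsDerivationComponent

variable [Fintype K] {n : ℕ}

lemma exists_coeff_ne_zero (hab : a < b) (hbn : b < n) (hK : Fintype.card K = p ^ n) {x : K}
    (hx : x ≠ 0) : ∃ z, coeff p a b x z ≠ 0 := by
  classical
  by_contra! h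
  have hfix : #{s : K | s ^ p ^ (b - a) = s} = p ^ n := by
    rw [filter_true_of_mem fun s _ => ?_, card_univ, hK]
    simpa [hx] using (coeff_eq_zero_iff hab.le hx (s * x)).mp (h _)
  have := hfix ▸ FiniteField.card_filter_pow_pow_eq_self_le (Fact.out : p.Prime).one_lt (by omega)
  have := (Nat.pow_le_pow_iff_right (Fact.out : p.Prime).one_lt).mp this
  omega

lemma card_coeff_eq_zero_sq_le (hab : a < b) (hbn : b < n) (hK : Fintype.card K = p ^ n)
    [DecidableEq K] {μ : K} (hμ : μ ≠ 0) : #{w : K | coeff p a b μ w = 0} ^ 2 ≤ p ^ n := by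
  set m := (b - a).gcd n
  have hp := (Fact.out : p.Prime).one_lt
  have hm : 0 < m := Nat.gcd_pos_of_pos_left _ (by omega)
  have h2m : 2 * m ≤ n := by
    obtain ⟨k, hk⟩ := Nat.gcd_dvd_right (b - a) n
    have : m ≤ b - a := Nat.le_of_dvd (by omega) (Nat.gcd_dvd_left _ _)
    have : 2 ≤ k := by
      by_contra
      interval_cases k <;> simp at hk <;> omega
    nlinarith
  have hperiodic : ∀ s : K, s ^ p ^ (b - a) = s → s ^ p ^ m = s := fun s hs => by
    have h1 : Function.IsPeriodicPt (frobenius K p) (b - a) s := by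
      rw [Function.IsPeriodicPt, Function.IsFixedPt, iterate_frobenius, hs]
    have h2 : Function.IsPeriodicPt (frobenius K p) n s := by
      rw [Function.IsPeriodicPt, Function.IsFixedPt, iterate_frobenius, ← hK,
        FiniteField.pow_card]
    simpa [Function.IsPeriodicPt, Function.IsFixedPt, iterate_frobenius] using h1.gcd h2
  -- `w ↦ w / μ` embeds the kernel into the fixed points of `x ↦ x ^ p ^ m`
  have hcard : #{w : K | coeff p a b μ w = 0} ≤ p ^ m := by
    refine le_trans (card_le_card_of_injOn (· / μ) (fun w hw => ?_) ?_)
      (FiniteField.card_filter_pow_pow_eq_self_le hp hm.ne')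
    · simp only [coe_filter, mem_univ, true_and, Set.mem_ofPred_eq] at hw ⊢
      exact hperiodic _ ((coeff_eq_zero_iff hab.le hμ w).mp hw)
    · exact fun u _ v _ huv => (div_left_inj' hμ).mp huv
  calc _ ≤ (p ^ m) ^ 2 := Nat.pow_le_pow_left hcard 2
    _ = p ^ (2 * m) := by ring
    _ ≤ p ^ n := Nat.pow_le_pow_right (by omega) h2m

lemma eq_zero_or_eq_of_coeff_eq_zero (hab : a < b) (hbn : b < n) (hK : Fintype.card K = p ^ n)
    {μ x₀ : K} (hμ : μ ≠ 0) (hcover : ∀ z, coeff p a b μ z = 0 ∨ coeff p a b μ (x₀ + z) = 0)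
    {z : K} (hz : coeff p a b μ z = 0) : z = 0 ∨ z = μ := by
  classical
  set A : Finset K := {w | coeff p a b μ w = 0}
  have hA : p ^ n ≤ 2 * #A := calc
    p ^ n = #(univ : Finset K) := by rw [card_univ, hK]
    _ ≤ #(A ∪ A.image (· - x₀)) := card_le_card fun w _ => by
      rcases hcover w with h | h
      · exact mem_union_left _ (by simpa [A] using h)
      · exact mem_union_right _ (mem_image.mpr ⟨x₀ + w, by simpa [A] using h, by ring⟩)
    _ ≤ #A + #A := (card_union_le _ _).trans (Nat.add_le_add_left card_image_le _)
    _ = 2 * #A := by ring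
  have hA2 : #A ≤ 2 := by nlinarith [card_coeff_eq_zero_sq_le hab hbn hK hμ]
  by_contra! hne
  have hsub : ({0, μ, z} : Finset K) ⊆ A := by
    intro w hw
    simp only [mem_insert, mem_singleton] at hw
    rcases hw with rfl | rfl | rfl <;> simp [A, coeff_zero_right, coeff_self, hz]
  have := card_le_card hsub
  rw [card_insert_of_notMem (by simp [hμ.symm, hne.1.symm]), card_pair hne.2.symm] at this
  omega

namespace IsDerivationComponent

variable {μ : K} {g : K → K}

lemma map_add (hab : a < b) (hbn : b < n) (hK : Fintype.card K = p ^ n)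
    (hg : IsDerivationComponent p a b 0 g) (x y : K) : g (x + y) = g x + g y := by
  have hgood : ∀ {x y : K}, coeff p a b x y ≠ 0 → g (x + y) = g x + g y := fun {x y} h => by
    have := hg.coeff_mul_sub x y
    rw [coeff_zero_left, coeff_zero_left, zero_mul, zero_mul, sub_zero] at this
    linear_combination (mul_eq_zero.mp this).resolve_left h
  rcases eq_or_ne x 0 with rfl | hx
  · rw [zero_add, hg.apply_zero, zero_add]
  rcases eq_or_ne y 0 with rfl | hy
  · rw [add_zero, hg.apply_zero, add_zero]
  rcases ne_or_eq (coeff p a b x y) 0 with hxy | hxy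
  · exact hgood hxy
  obtain ⟨z, hz⟩ := exists_coeff_ne_zero hab hbn hK hx
  rcases eq_or_ne (x + y) 0 with hs | hs
  · obtain rfl : y = -x := eq_neg_of_add_eq_zero_right hs
    have h₁ := hgood (x := z) (y := x) (by rwa [coeff_swap, neg_ne_zero])
    have h₂ := hgood (x := z + x) (y := -x) (by
      rwa [coeff_neg_right, coeff_add_left, coeff_self, add_zero, coeff_swap, neg_neg])
    rw [add_neg_cancel_right] at h₂
    rw [hs, hg.apply_zero]
    linear_combination h₁ + h₂
  · have hyz : coeff p a b y z ≠ 0 := fun h => hz (coeff_eq_zero_trans hab.le hx hy hxy h)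
    have hxs : coeff p a b x (x + y) = 0 := by rwa [coeff_add_right, coeff_self, zero_add]
    have h₁ := hgood fun h => hz (coeff_eq_zero_trans hab.le hx hs hxs h)
    have h₂ := hgood (x := x) (y := y + z) (by rwa [coeff_add_right, hxy, zero_add])
    rw [hgood hyz, ← add_assoc] at h₂
    linear_combination h₂ - h₁

lemma coeff_mul_eq_of_two_eq_zero (hab : a < b) (hbn : b < n) (hK : Fintype.card K = p ^ n)
    (hg : IsDerivationComponent p a b μ g) (hμ : μ ≠ 0) (h2 : (2 : K) = 0) {ξ η : K}
    (hξ : coeff p a b μ ξ ≠ 0) (hη : coeff p a b μ η ≠ 0) (hξη : coeff p a b μ (ξ + η) = 0) :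
    coeff p a b μ η * g ξ = coeff p a b μ ξ * g η := by
  by_cases hζ : ∃ ζ, coeff p a b μ ζ ≠ 0 ∧ coeff p a b μ (ξ + ζ) ≠ 0
  · obtain ⟨ζ, hζ, hξζ⟩ := hζ
    have hηζ : coeff p a b μ (η + ζ) ≠ 0 := by
      have : coeff p a b μ (η + ζ) = coeff p a b μ (ξ + ζ) := by
        rw [coeff_add_right] at hξη
        rw [coeff_add_right, coeff_add_right]
        linear_combination hξη - coeff p a b μ ξ * h2
      rwa [this]
    have h₁ := hg.coeff_mul_eq_of_coeff_add_ne_zero hξ hζ hξζ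
    have h₂ := hg.coeff_mul_eq_of_coeff_add_ne_zero hη hζ hηζ
    refine mul_left_cancel₀ hζ ?_
    linear_combination coeff p a b μ η * h₁ - coeff p a b μ ξ * h₂
  -- Otherwise the kernel of `coeff μ` has index `2`, which forces it to be `{0, μ}`.
  have hcover : ∀ z, coeff p a b μ z = 0 ∨ coeff p a b μ (ξ + z) = 0 := fun z => by
    by_contra! h
    exact hζ ⟨z, h⟩
  rcases eq_zero_or_eq_of_coeff_eq_zero hab hbn hK hμ hcover hξη with h | h
  · obtain rfl : η = ξ := by linear_combination h - ξ * h2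
    rfl
  · obtain rfl : η = ξ + μ := by linear_combination h - ξ * h2
    rw [hg.apply_add_eq hξ, coeff_add_right, coeff_self, add_zero]

lemma coeff_mul_eq (hab : a < b) (hbn : b < n) (hK : Fintype.card K = p ^ n)
    (hg : IsDerivationComponent p a b μ g) (hμ : μ ≠ 0) {ξ η : K} (hξ : coeff p a b μ ξ ≠ 0)
    (hη : coeff p a b μ η ≠ 0) : coeff p a b μ η * g ξ = coeff p a b μ ξ * g η := by
  rcases ne_or_eq (coeff p a b μ (ξ + η)) 0 with hξη | hξη
  · exact hg.coeff_mul_eq_of_coeff_add_ne_zero hξ hη hξη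
  by_cases h2 : (2 : K) = 0
  · exact hg.coeff_mul_eq_of_two_eq_zero hab hbn hK hμ h2 hξ hη hξη
  have h2ξ : coeff p a b μ (ξ + ξ) ≠ 0 := by
    rw [coeff_add_right, ← two_mul]
    exact mul_ne_zero h2 hξ
  have hη2ξ : coeff p a b μ (η + (ξ + ξ)) = coeff p a b μ ξ := by
    rw [coeff_add_right] at hξη
    rw [coeff_add_right, coeff_add_right]
    linear_combination hξη
  have h₂ := hg.coeff_mul_eq_of_coeff_add_ne_zero hη h2ξ (hη2ξ ▸ hξ)
  rw [hg.map_add_of_coeff_ne_zero hξ hξ h2ξ, coeff_add_right] at h₂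
  refine mul_left_cancel₀ h2 ?_
  linear_combination -h₂

lemma exists_eq_mul_coeff (hab : a < b) (hbn : b < n) (hK : Fintype.card K = p ^ n)
    (hg : IsDerivationComponent p a b μ g) (hμ : μ ≠ 0) :
    ∃ t, ∀ x, g x = t * coeff p a b μ x := by
  obtain ⟨x₀, hx₀⟩ := exists_coeff_ne_zero hab hbn hK hμ
  set t := g x₀ / coeff p a b μ x₀
  have hratio : ∀ {x}, coeff p a b μ x ≠ 0 → g x = t * coeff p a b μ x := fun {x} hx => by
    rw [div_mul_eq_mul_div, eq_div_iff hx₀]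
    linear_combination hg.coeff_mul_eq hab hbn hK hμ hx hx₀
  refine ⟨t, fun x => ?_⟩
  rcases ne_or_eq (coeff p a b μ x) 0 with hx | hx
  · exact hratio hx
  rcases eq_or_ne x 0 with rfl | hx0
  · rw [hg.apply_zero, coeff_zero_right, mul_zero]
  -- Split `x` in the kernel of `coeff μ` as `x₀ + (x - x₀)`, both terms outside the kernel.
  have hx' : coeff p a b μ (x - x₀) ≠ 0 := by
    rwa [coeff_sub_right, hx, zero_sub, neg_ne_zero]
  have hcx : coeff p a b x₀ (x - x₀) ≠ 0 := by
    rw [coeff_sub_right, coeff_self, sub_zero]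
    exact fun h => hx₀ (coeff_eq_zero_trans hab.le hμ hx0 hx (by rw [coeff_swap, h, neg_zero]))
  have hsum : coeff p a b μ x₀ + coeff p a b μ (x - x₀) = 0 := by
    rw [← coeff_add_right, add_sub_cancel, hx]
  have h := hg.coeff_mul_sub x₀ (x - x₀)
  rw [add_sub_cancel, hratio hx₀, hratio hx'] at h
  have h' : coeff p a b x₀ (x - x₀) * g x = 0 := by
    linear_combination h + coeff p a b x₀ (x - x₀) * t * hsum
  rw [(mul_eq_zero.mp h').resolve_left hcx, hx, mul_zero]

end IsDerivationComponent

end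

section

variable {K L : Type*} [Field K] [LieRing L] [LieAlgebra K L]

structure IsStandardBasis (p a b : ℕ) (E : K → L) (B : Basis {ξ : K // ξ ≠ 0} K L) :
    Prop where
  apply_zero : E 0 = 0
  basis_eq (ξ : {ξ : K // ξ ≠ 0}) : B ξ = E ξ.1
  lie_eq (ξ η : K) : ⁅E ξ, E η⁆ = coeff p a b ξ η • E (ξ + η)

open scoped Classical in
/-- Coordinates in `B`, indexed by all of `K` and extended by `0` at `0`. -/
noncomputable def coordFun (B : Basis {ξ : K // ξ ≠ 0} K L) : L →ₗ[K] K → K :=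
  LinearMap.pi fun σ => if h : σ = 0 then 0 else B.coord ⟨σ, h⟩

section coordFun

variable (B : Basis {ξ : K // ξ ≠ 0} K L)

@[simp] lemma coordFun_apply_zero (u : L) : coordFun B u 0 = 0 := by
  simp [coordFun]

lemma coordFun_apply_of_ne (u : L) {σ : K} (hσ : σ ≠ 0) :
    coordFun B u σ = B.repr u ⟨σ, hσ⟩ := by
  simp [coordFun, hσ]

lemma coordFun_injective : Function.Injective (coordFun B) := fun u v h =>
  B.ext_elem fun σ => by rw [← coordFun_apply_of_ne, ← coordFun_apply_of_ne, h]

end coordFun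

namespace IsStandardBasis

variable {p a b : ℕ} {E : K → L} {B : Basis {ξ : K // ξ ≠ 0} K L}

open scoped Classical in
lemma coordFun_E (hL : IsStandardBasis p a b E B) (ξ : K) {τ : K} (hτ : τ ≠ 0) :
    coordFun B (E ξ) τ = if ξ = τ then 1 else 0 := by
  rcases eq_or_ne ξ 0 with rfl | hξ
  · simp [hL.apply_zero, hτ.symm]
  · rw [coordFun_apply_of_ne B _ hτ, ← show B ⟨ξ, hξ⟩ = E ξ from hL.basis_eq _, B.repr_self,
      Finsupp.single_apply]
    simp [Subtype.ext_iff]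

open scoped Classical in
lemma coordFun_E_add (hL : IsStandardBasis p a b E B) {x : K} (hx : x ≠ 0) (μ : K) :
    coordFun B (E x) (x + μ) = if μ = 0 then 1 else 0 := by
  rcases eq_or_ne (x + μ) 0 with h | h
  · rw [h, coordFun_apply_zero, if_neg]
    rintro rfl
    exact hx (by simpa using h)
  · simp [hL.coordFun_E x h]

lemma ext_E (hL : IsStandardBasis p a b E B) {D₁ D₂ : LieDerivation K L L}
    (h : ∀ x, D₁ (E x) = D₂ (E x)) : D₁ = D₂ :=
  LieDerivation.ext fun u => LinearMap.congr_fun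
    (B.ext (f₁ := (D₁ : L →ₗ[K] L)) (f₂ := D₂) fun σ => by simp [hL.basis_eq, h]) u

lemma constr_E (hL : IsStandardBasis p a b E B) (f : K →+ K) (x : K) :
    B.constr K (fun σ => f σ.1 • B σ) (E x) = f x • E x := by
  rcases eq_or_ne x 0 with rfl | hx
  · simp [hL.apply_zero]
  · rw [← show B ⟨x, hx⟩ = E x from hL.basis_eq _, B.constr_basis]

noncomputable def diagDerivation (hL : IsStandardBasis p a b E B) :
    (K →+ K) →ₗ[K] LieDerivation K L L where
  toFun f := LieDerivation.ofBasis B (B.constr K fun σ => f σ.1 • B σ) fun σ τ => by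
    rw [hL.basis_eq σ, hL.basis_eq τ, hL.lie_eq, map_smul, hL.constr_E, hL.constr_E, hL.constr_E,
      smul_lie, lie_smul, hL.lie_eq, smul_smul, smul_smul, smul_smul, ← add_smul, map_add,
      mul_comm, add_mul]
  map_add' f g := hL.ext_E fun x => by
    simp only [LieDerivation.add_apply, LieDerivation.ofBasis_apply]
    rw [hL.constr_E, hL.constr_E, hL.constr_E, AddMonoidHom.add_apply, add_smul]
  map_smul' c f := hL.ext_E fun x => by
    simp only [LieDerivation.smul_apply, LieDerivation.ofBasis_apply, RingHom.id_apply]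
    rw [hL.constr_E, hL.constr_E, AddMonoidHom.smul_apply, smul_assoc]

lemma diagDerivation_apply_E (hL : IsStandardBasis p a b E B) (f : K →+ K) (x : K) :
    hL.diagDerivation f (E x) = f x • E x :=
  hL.constr_E f x

variable [Fact p.Prime] [CharP K p]

lemma coordFun_E_lie (hL : IsStandardBasis p a b E B) (η : K) (u : L) (τ : K) :
    coordFun B ⁅E η, u⁆ τ = coeff p a b η (τ - η) * coordFun B u (τ - η) := by
  rcases eq_or_ne τ 0 with rfl | hτ
  · rw [coordFun_apply_zero, zero_sub, coeff_neg_right, coeff_self, neg_zero, zero_mul]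
  let f₁ : L →ₗ[K] K := LinearMap.proj τ ∘ₗ coordFun B ∘ₗ LieModule.toEnd K L L (E η)
  let f₂ : L →ₗ[K] K := coeff p a b η (τ - η) • (LinearMap.proj (τ - η) ∘ₗ coordFun B)
  suffices f₁ = f₂ from LinearMap.congr_fun this u
  refine B.ext fun σ => ?_
  simp only [f₁, f₂, LinearMap.comp_apply, LinearMap.smul_apply, LinearMap.proj_apply,
    LieModule.toEnd_apply_apply, hL.basis_eq, hL.lie_eq, map_smul, smul_eq_mul,
    hL.coordFun_E _ hτ]
  rcases eq_or_ne (τ - η) 0 with h | h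
  · have : η + σ.1 ≠ τ := fun h' => σ.2 (by linear_combination h' + h)
    simp [h, this]
  · rw [hL.coordFun_E _ h]
    by_cases hσ : σ.1 = τ - η
    · rw [if_pos (by linear_combination hσ), if_pos hσ, hσ]
    · rw [if_neg (fun h' : η + σ.1 = τ => hσ (by linear_combination h')), if_neg hσ, mul_zero,
        mul_zero]

lemma coordFun_lie_E_add (hL : IsStandardBasis p a b E B) (w : L) (x μ : K) :
    coordFun B ⁅w, E x⁆ (x + μ) = coordFun B w μ * coeff p a b μ x := by
  rw [← lie_skew, map_neg, Pi.neg_apply, hL.coordFun_E_lie, add_sub_cancel_left,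
    coeff_swap p a b μ x]
  ring

lemma isDerivationComponent (hL : IsStandardBasis p a b E B) (D : LieDerivation K L L) (μ : K) :
    IsDerivationComponent p a b μ fun x => coordFun B (D (E x)) (x + μ) where
  apply_zero := by simp [hL.apply_zero]
  apply_neg := by simp
  leibniz ξ η := by
    have h := congr_arg (coordFun B · (ξ + η + μ)) (D.apply_lie_eq_sub (E ξ) (E η))
    simp only [hL.lie_eq, map_smul, map_sub, Pi.sub_apply, Pi.smul_apply, smul_eq_mul,
      hL.coordFun_E_lie] at h
    rw [show ξ + η + μ - ξ = η + μ by ring, show ξ + η + μ - η = ξ + μ by ring,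
      coeff_swap p a b (ξ + μ) η] at h
    linear_combination h

lemma eq_zero_of_diagDerivation_mem_range_ad (hL : IsStandardBasis p a b E B) {f : K →+ K}
    (h : hL.diagDerivation f ∈ LinearMap.range (LieDerivation.ad K L).toLinearMap) : f = 0 := by
  obtain ⟨w, hw⟩ := h
  ext x
  rcases eq_or_ne x 0 with rfl | hx
  · simp
  have := congr_arg (fun D : LieDerivation K L L => coordFun B (D (E x)) (x + 0)) hw
  simp only [LieHom.coe_toLinearMap, LieDerivation.ad_apply_apply, hL.coordFun_lie_E_add,
    coeff_zero_left, mul_zero, hL.diagDerivation_apply_E, map_smul, Pi.smul_apply,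
    hL.coordFun_E_add hx, if_pos, smul_eq_mul, mul_one] at this
  exact this.symm

variable [Fintype K] {n : ℕ}

lemma exists_eq_diagDerivation_add_ad (hab : a < b) (hbn : b < n) (hK : Fintype.card K = p ^ n)
    (hL : IsStandardBasis p a b E B) (D : LieDerivation K L L) :
    ∃ f w, D = hL.diagDerivation f + LieDerivation.ad K L w := by
  classical
  have hg := hL.isDerivationComponent D
  choose t ht using fun σ : {μ : K // μ ≠ 0} => (hg σ).exists_eq_mul_coeff hab hbn hK σ.2
  refine ⟨AddMonoidHom.mk' _ ((hg 0).map_add hab hbn hK), ∑ σ, t σ • B σ, hL.ext_E fun x => ?_⟩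
  rcases eq_or_ne x 0 with rfl | hx
  · simp [hL.apply_zero]
  refine coordFun_injective B (funext fun τ => ?_)
  obtain ⟨μ, rfl⟩ : ∃ μ, τ = x + μ := ⟨τ - x, by ring⟩
  simp only [LieDerivation.add_apply, map_add, Pi.add_apply, hL.diagDerivation_apply_E,
    map_smul, Pi.smul_apply, smul_eq_mul, hL.coordFun_E_add hx, LieDerivation.ad_apply_apply,
    hL.coordFun_lie_E_add]
  rcases eq_or_ne μ 0 with rfl | hμ
  · simp [coeff_zero_left]
  · rw [coordFun_apply_of_ne B _ hμ, B.repr_sum_self, ht ⟨μ, hμ⟩]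
    simp [hμ]

lemma bijective_mkQ_comp_diagDerivation (hab : a < b) (hbn : b < n)
    (hK : Fintype.card K = p ^ n) (hL : IsStandardBasis p a b E B) :
    Function.Bijective
      ((LinearMap.range (LieDerivation.ad K L).toLinearMap).mkQ ∘ₗ hL.diagDerivation) := by
  refine ⟨?_, fun q => ?_⟩
  · rw [← LinearMap.ker_eq_bot, LinearMap.ker_eq_bot']
    intro f hf
    exact hL.eq_zero_of_diagDerivation_mem_range_ad (by simpa using hf)
  · obtain ⟨D, rfl⟩ := Submodule.mkQ_surjective _ q
    obtain ⟨f, w, rfl⟩ := hL.exists_eq_diagDerivation_add_ad hab hbn hK D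
    refine ⟨f, ?_⟩
    simp

end IsStandardBasis

end

end AlbertFrank

/-- For the Albert–Frank algebra `L = AF(a,b,n,p)`, the quotient of the
space of derivations of `L` by the inner derivations `ad(L)` has dimension `n` over
`F_{p^n}`; a basis is given by the classes of the `n` derivations `D_s` (`0 ≤ s < n`)
with `D_s(e_ξ) = ξ^{p^s} • e_ξ`. -/
theorem stmt_4 (p a b n : ℕ) (hp : p.Prime) (hab : a < b) (hbn : b < n)
    (K : Type*) [Field K] [Fintype K] (hK : Fintype.card K = p ^ n)
    (L : Type*) [LieRing L] [LieAlgebra K L]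
    -- `E ξ` represents the basis element `e_ξ` (with `e_0 = 0`)
    (E : K → L) (hE0 : E 0 = 0)
    (B : Module.Basis {ξ : K // ξ ≠ 0} K L) (hB : ∀ ξ, B ξ = E ξ.1)
    (hbr : ∀ ξ η : K,
      ⁅E ξ, E η⁆ = (ξ ^ p ^ a * η ^ p ^ b - ξ ^ p ^ b * η ^ p ^ a) • E (ξ + η)) :
    Module.finrank K
        ((LieDerivation K L L) ⧸ LinearMap.range (LieDerivation.ad K L).toLinearMap) = n ∧
      ∃ D : Fin n → LieDerivation K L L,
        (∀ s : Fin n, ∀ ξ : K, D s (E ξ) = ξ ^ p ^ (s : ℕ) • E ξ) ∧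
        ∃ Bq : Module.Basis (Fin n) K
            ((LieDerivation K L L) ⧸ LinearMap.range (LieDerivation.ad K L).toLinearMap),
          ∀ s : Fin n, Bq s = Submodule.Quotient.mk (D s) := by
  have := Fact.mk hp
  have := charP_of_card_eq_prime_pow (p := p) hK
  have hL : AlbertFrank.IsStandardBasis p a b E B := ⟨hE0, hB, hbr⟩
  let frob := FiniteField.frobeniusPowAddMonoidHomBasis hK
  let Bq := frob.map
    (LinearEquiv.ofBijective _ (hL.bijective_mkQ_comp_diagDerivation hab hbn hK))
  refine ⟨by rw [Module.finrank_eq_card_basis Bq, Fintype.card_fin],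
    fun s => hL.diagDerivation (frob s), fun s ξ => ?_, Bq, fun s => rfl⟩
  rw [hL.diagDerivation_apply_E, FiniteField.frobeniusPowAddMonoidHomBasis_apply]
end

section
/- Let F be a field of characteristic 2, let (n₁,n₂) be positive integers, and let L = H(2:(n₁,n₂);ω₂) over F. Then every 2-cocycle of L with values in the trivial module F is a 2-coboundary; that is, H²(L,F) = 0. -/
/-- Integer binomial coefficient, zero when either entry is negative. -/
def ichoose (n k : ℤ) : ℤ := if 0 ≤ n ∧ 0 ≤ k then (n.toNat.choose k.toNat : ℤ) else 0

/-- The structure constant `N(i,j,k,l)` of the Hamiltonian algebra `H(2:(n₁,n₂);ω₂)`. -/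
def hamN (i j k l : ℤ) : ℤ :=
  ichoose (i + k - 1) i * ichoose (j + l - 1) (j - 1) -
    ichoose (i + k - 1) (i - 1) * ichoose (j + l - 1) j

/-- A 2-cocycle of a Lie algebra `L` with values in the trivial module `F`:
an alternating bilinear map satisfying the cocycle identity. -/
def IsTwoCocycle {F L : Type*} [Field F] [LieRing L] [LieAlgebra F L]
    (φ : L →ₗ[F] L →ₗ[F] F) : Prop :=
  (∀ u : L, φ u u = 0) ∧ ∀ u v w : L, φ ⁅u, v⁆ w + φ ⁅v, w⁆ u + φ ⁅w, u⁆ v = 0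

/-- A 2-coboundary: a bilinear map of the form `(u,v) ↦ f ⁅u,v⁆`. -/
def IsTwoCoboundary {F L : Type*} [Field F] [LieRing L] [LieAlgebra F L]
    (φ : L →ₗ[F] L →ₗ[F] F) : Prop :=
  ∃ f : L →ₗ[F] F, ∀ u v : L, φ u v = f ⁅u, v⁆

/-!
Over characteristic two, subtract from a cocycle `φ` the coboundary of a functional `f` chosen so
that the difference `ψ` vanishes on `⁅x, X k l⁆` for `l ≥ 1` and on `⁅y, X k (2^n₂-1)⁆` for `k ≥ 1`,
where `x = X 1 0` and `y = X 0 1`; these brackets run over the basis exactly once. Then `ψ = 0`: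
first `ψ x = 0`, because the cocycle identity gives `ψ (X i 0) (X (a+1-i) 0) = C(a,i) ψ x (X a 0)`
and summing over `i` the left side cancels in pairs while `∑ C(a,i) = 2^a - 1` is odd. Hence
`ad x` is self-adjoint for `ψ`, which lets one slide degree between the arguments of
`ψ (X 0 j) (X k l)`; together with a telescoping identity for `ψ (X i 1) (X (a-i) (2^n₂-2))` this
gives `ψ y = 0`. Finally the radical of a cocycle is a subalgebra and `x`, `y` generate `L`.
-/

lemma ichoose_natCast (a b : ℕ) : ichoose a b = a.choose b := by
  simp [ichoose]

lemma ichoose_of_neg_right {n k : ℤ} (hk : k < 0) : ichoose n k = 0 := by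
  simp [ichoose, hk.not_ge]

lemma ichoose_zero_right {n : ℤ} (hn : 0 ≤ n) : ichoose n 0 = 1 := by
  simp [ichoose, hn]

lemma ichoose_one_right {n : ℤ} (hn : 0 ≤ n) : ichoose n 1 = n := by
  simp [ichoose, hn]

lemma hamN_one_zero {k l : ℤ} (hk : 0 ≤ k) (hl : 1 ≤ l) : hamN 1 0 k l = -1 := by
  simp [hamN, ichoose_of_neg_right, ichoose_zero_right hk,
    ichoose_zero_right (by omega : 0 ≤ l - 1)]

lemma hamN_zero_one {k l : ℤ} (hk : 1 ≤ k) (hl : 0 ≤ l) : hamN 0 1 k l = 1 := by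
  simp [hamN, ichoose_of_neg_right, ichoose_zero_right hl,
    ichoose_zero_right (by omega : 0 ≤ k - 1)]

lemma hamN_of_snd_eq_one (i k : ℤ) {l : ℤ} (hl : 0 ≤ l) :
    hamN i 1 k l = ichoose (i + k - 1) i - ichoose (i + k - 1) (i - 1) * l := by
  simp [hamN, ichoose_zero_right hl, ichoose_one_right hl]

lemma hamN_one_one_zero {l : ℤ} (hl : 0 ≤ l) : hamN 1 1 0 l = -l := by
  simpa [ichoose] using hamN_of_snd_eq_one 1 0 hl

lemma sum_range_choose_succ_eq_one (R : Type*) [Ring R] [CharP R 2] {a : ℕ} (ha : a ≠ 0) :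
    ∑ i ∈ Finset.range a, (a.choose (i + 1) : R) = 1 := by
  have h := congrArg (Nat.cast : ℕ → R) (Nat.sum_range_choose a)
  rw [Nat.cast_sum, Finset.sum_range_succ', Nat.cast_pow, Nat.cast_ofNat, CharTwo.two_eq_zero,
    zero_pow ha, Nat.choose_zero_right, Nat.cast_one] at h
  rw [eq_neg_of_add_eq_zero_left h, CharTwo.neg_eq]

lemma LinearMap.IsAlt.sum_range_reflect_eq_zero {R M : Type*} [CommRing R] [AddCommGroup M]
    [Module R M] {b : M →ₗ[R] M →ₗ[R] R} (hb : b.IsAlt) (g : ℕ → M) (n : ℕ) :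
    ∑ i ∈ Finset.range n, b (g i) (g (n - 1 - i)) = 0 := by
  refine Finset.sum_involution (fun i _ => n - 1 - i) (fun i hi => ?_) (fun i hi hne => ?_)
    (fun i hi => ?_) (fun i hi => ?_)
  · rw [Finset.mem_range] at hi
    rw [show n - 1 - (n - 1 - i) = i by omega, ← hb.neg, neg_add_cancel]
  · rw [Finset.mem_range] at hi
    rintro hfix
    exact hne (by rw [hfix, hb.self_eq_zero])
  · simp only [Finset.mem_range] at hi ⊢
    omega
  · rw [Finset.mem_range] at hi
    omega

section Cocycles

variable {F L : Type*} [Field F] [LieRing L] [LieAlgebra F L]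

def lieCoboundary (f : L →ₗ[F] F) : L →ₗ[F] L →ₗ[F] F :=
  (LieModule.toEnd F L L : L →ₗ[F] Module.End F L).compr₂ f

@[simp]
lemma lieCoboundary_apply (f : L →ₗ[F] F) (u v : L) : lieCoboundary f u v = f ⁅u, v⁆ := by
  simp [lieCoboundary]

namespace IsTwoCocycle

variable {φ : L →ₗ[F] L →ₗ[F] F}

lemma isAlt (hφ : IsTwoCocycle φ) : φ.IsAlt := hφ.1

lemma sub_lieCoboundary (hφ : IsTwoCocycle φ) (f : L →ₗ[F] F) :
    IsTwoCocycle (φ - lieCoboundary f) := by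
  refine ⟨fun u => by simp [hφ.1 u], fun u v w => ?_⟩
  have hjac : ⁅⁅u, v⁆, w⁆ + ⁅⁅v, w⁆, u⁆ + ⁅⁅w, u⁆, v⁆ = 0 := by
    rw [← lie_skew ⁅u, v⁆ w, ← lie_skew ⁅v, w⁆ u, ← lie_skew ⁅w, u⁆ v, ← neg_add, ← neg_add,
      lie_jacobi, neg_zero]
  have hfjac := congrArg f hjac
  simp only [map_add, map_zero] at hfjac
  simp only [LinearMap.sub_apply, lieCoboundary_apply]
  linear_combination hφ.2 u v w - hfjac

lemma lie_apply (hφ : IsTwoCocycle φ) (u v w : L) :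
    φ ⁅u, v⁆ w = φ u ⁅v, w⁆ + φ ⁅u, w⁆ v := by
  have h := hφ.2 u v w
  rw [← hφ.isAlt.neg u, ← lie_skew w u, map_neg, LinearMap.neg_apply] at h
  linear_combination h

lemma apply_comm [CharP F 2] (hφ : IsTwoCocycle φ) (u v : L) : φ u v = φ v u := by
  rw [← hφ.isAlt.neg, CharTwo.neg_eq]

lemma apply_lie_of_apply_eq_zero (hφ : IsTwoCocycle φ) {u : L} (hu : φ u = 0) (v w : L) :
    φ ⁅u, v⁆ w = -φ v ⁅u, w⁆ := by
  rw [hφ.lie_apply, hu, LinearMap.zero_apply, zero_add, hφ.isAlt.neg]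

lemma apply_lie_eq_zero (hφ : IsTwoCocycle φ) {u w : L} (hu : φ u = 0) (hw : φ w = 0) :
    φ ⁅u, w⁆ = 0 := by
  ext v
  rw [hφ.apply_lie_of_apply_eq_zero hu, hw, LinearMap.zero_apply, neg_zero,
    LinearMap.zero_apply]

def radical (hφ : IsTwoCocycle φ) : LieSubalgebra F L :=
  { LinearMap.ker φ with lie_mem' := fun hu hw => hφ.apply_lie_eq_zero hu hw }

end IsTwoCocycle

end Cocycles

def IsHamIndex (n₁ n₂ : ℕ) (i j : ℤ) : Prop :=
  0 ≤ i ∧ i < 2 ^ n₁ ∧ 0 ≤ j ∧ j < 2 ^ n₂ ∧ ¬(i = 0 ∧ j = 0)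

abbrev HamIndex (n₁ n₂ : ℕ) : Type :=
  {ij : ℕ × ℕ // ij.1 < 2 ^ n₁ ∧ ij.2 < 2 ^ n₂ ∧ ij ≠ (0, 0)}

lemma isHamIndex_iff {n₁ n₂ : ℕ} {k l : ℤ} :
    IsHamIndex n₁ n₂ k l ↔ ∃ v : HamIndex n₁ n₂, (v.1.1 : ℤ) = k ∧ (v.1.2 : ℤ) = l := by
  constructor
  · rintro ⟨hk, hk', hl, hl', hkl⟩
    refine ⟨⟨(k.toNat, l.toNat), ?_, ?_, ?_⟩, by simp [hk], by simp [hl]⟩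
    · zify [Nat.one_le_two_pow]; omega
    · zify [Nat.one_le_two_pow]; omega
    · simp only [ne_eq, Prod.mk.injEq]; omega
  · rintro ⟨⟨⟨k, l⟩, hk, hl, hkl⟩, rfl, rfl⟩
    rw [Ne, Prod.mk.injEq] at hkl
    exact ⟨by positivity, by exact_mod_cast hk, by positivity, by exact_mod_cast hl,
      by exact_mod_cast hkl⟩

/-- `X i j` stands for `x^{(i)} y^{(j)}`, extended by zero outside the index box; the symbol
`X 0 0` is `e = x^{(2^n₁-1)} y^{(2^n₂-1)}`. -/
structure IsHamiltonianFrame (F : Type*) {L : Type*} [Field F] [LieRing L] [LieAlgebra F L]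
    (n₁ n₂ : ℕ) (X : ℤ → ℤ → L) : Prop where
  pos_left : 0 < n₁
  pos_right : 0 < n₂
  eq_zero : ∀ i j : ℤ, (i < 0 ∨ j < 0 ∨ (2 : ℤ) ^ n₁ ≤ i ∨ (2 : ℤ) ^ n₂ ≤ j) → X i j = 0
  zero_zero : X 0 0 = X (2 ^ n₁ - 1) (2 ^ n₂ - 1)
  lie : ∀ i j k l : ℤ, IsHamIndex n₁ n₂ i j → IsHamIndex n₁ n₂ k l →
    ⁅X i j, X k l⁆ = (hamN i j k l : F) • X (i + k - 1) (j + l - 1)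

section Basis

variable {F L M : Type*} [Field F] [LieRing L] [LieAlgebra F L] [AddCommGroup M] [Module F M]
  {n₁ n₂ : ℕ} {X : ℤ → ℤ → L}

lemma linearMap_eq_zero_of_apply_X (B : Module.Basis (HamIndex n₁ n₂) F L)
    (hB : ∀ v, B v = X v.1.1 v.1.2) {g : L →ₗ[F] M}
    (h : ∀ k l, IsHamIndex n₁ n₂ k l → g (X k l) = 0) : g = 0 :=
  B.ext fun v => by rw [hB, h _ _ (isHamIndex_iff.2 ⟨v, rfl, rfl⟩), LinearMap.zero_apply]

lemma exists_linearMap_apply_X (B : Module.Basis (HamIndex n₁ n₂) F L)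
    (hB : ∀ v, B v = X v.1.1 v.1.2) (c : ℤ → ℤ → M) :
    ∃ g : L →ₗ[F] M, ∀ k l, IsHamIndex n₁ n₂ k l → g (X k l) = c k l := by
  refine ⟨B.constr F fun v => c v.1.1 v.1.2, fun k l hkl => ?_⟩
  obtain ⟨v, rfl, rfl⟩ := isHamIndex_iff.1 hkl
  rw [← hB, Module.Basis.constr_basis]

end Basis

namespace IsHamiltonianFrame

variable {F L : Type*} [Field F] [LieRing L] [LieAlgebra F L] {n₁ n₂ : ℕ} {X : ℤ → ℤ → L}

lemma two_le_pow_left (hX : IsHamiltonianFrame F n₁ n₂ X) : (2 : ℤ) ≤ 2 ^ n₁ :=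
  le_self_pow₀ one_le_two hX.pos_left.ne'

lemma two_le_pow_right (hX : IsHamiltonianFrame F n₁ n₂ X) : (2 : ℤ) ≤ 2 ^ n₂ :=
  le_self_pow₀ one_le_two hX.pos_right.ne'

lemma lie_X_zero_one (hX : IsHamiltonianFrame F n₁ n₂ X) {k l : ℤ} (hkl : IsHamIndex n₁ n₂ k l) :
    ⁅X 0 1, X k l⁆ = X (k - 1) l := by
  have := hX.two_le_pow_left
  have := hX.two_le_pow_right
  rw [hX.lie 0 1 k l (by unfold IsHamIndex; omega) hkl, zero_add, add_sub_cancel_left]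
  obtain ⟨hk, -, hl, -⟩ := hkl
  rcases hk.eq_or_lt with rfl | hk
  · rw [hX.eq_zero (0 - 1) l (by omega), smul_zero]
  · rw [hamN_zero_one hk hl, Int.cast_one, one_smul]

variable [CharP F 2]

lemma lie_X_one_zero (hX : IsHamiltonianFrame F n₁ n₂ X) {k l : ℤ} (hkl : IsHamIndex n₁ n₂ k l) :
    ⁅X 1 0, X k l⁆ = X k (l - 1) := by
  have := hX.two_le_pow_left
  have := hX.two_le_pow_right
  rw [hX.lie 1 0 k l (by unfold IsHamIndex; omega) hkl, add_sub_cancel_left, zero_add]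
  obtain ⟨hk, -, hl, -⟩ := hkl
  rcases hl.eq_or_lt with rfl | hl
  · rw [hX.eq_zero k (0 - 1) (by omega), smul_zero]
  · rw [hamN_one_zero hk hl, Int.cast_neg, Int.cast_one, CharTwo.neg_eq, one_smul]

lemma lie_X_one_one (hX : IsHamiltonianFrame F n₁ n₂ X) {l : ℤ} (hl : 1 ≤ l) (hl' : l < 2 ^ n₂) :
    ⁅X 1 1, X 0 l⁆ = (l : F) • X 0 l := by
  have := hX.two_le_pow_left
  have := hX.two_le_pow_right
  rw [hX.lie 1 1 0 l (by unfold IsHamIndex; omega) (by unfold IsHamIndex; omega),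
    hamN_one_one_zero (by omega), Int.cast_neg, CharTwo.neg_eq]
  simp

lemma lie_X_one_of_even (hX : IsHamiltonianFrame F n₁ n₂ X) {i k l : ℤ} (hi : 0 ≤ i)
    (hi' : i < 2 ^ n₁) (hkl : IsHamIndex n₁ n₂ k l) (hl : Even l) :
    ⁅X i 1, X k l⁆ = (ichoose (i + k - 1) i : F) • X (i + k - 1) l := by
  have := hX.two_le_pow_right
  rw [hX.lie i 1 k l (by unfold IsHamIndex; omega) hkl, hamN_of_snd_eq_one i k hkl.2.2.1,
    add_sub_cancel_left, Int.cast_sub, Int.cast_mul, CharTwo.intCast_eq_ite l, if_pos hl,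
    mul_zero, sub_zero]

variable {ψ : L →ₗ[F] L →ₗ[F] F}

lemma apply_X_one_zero_X_zero_eq_zero (hX : IsHamiltonianFrame F n₁ n₂ X)
    (hψ : IsTwoCocycle ψ) {a : ℕ} (ha : a ≠ 0) (ha' : (a : ℤ) < 2 ^ n₁) :
    ψ (X 1 0) (X a 0) = 0 := by
  have := hX.two_le_pow_right
  set g : ℕ → L := fun i => X (i + 1) 0
  have key : ∀ i ∈ Finset.range a,
      ψ (g i) (g (a - 1 - i)) = (a.choose (i + 1) : F) * ψ (X 1 0) (X a 0) := by
    intro i hi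
    rw [Finset.mem_range] at hi
    have h := hψ.lie_apply (X 1 0) (X (i + 1) 1) (g (a - 1 - i))
    have hsum : (i + 1 : ℤ) + ((a - 1 - i : ℕ) + 1) - 1 = a := by omega
    rw [hX.lie_X_one_zero (by unfold IsHamIndex; omega), sub_self,
      hX.lie_X_one_zero (by unfold IsHamIndex; omega), zero_sub, hX.eq_zero _ (-1) (by omega),
      hX.lie_X_one_of_even (l := 0) (by omega) (by omega) (by unfold IsHamIndex; omega) Even.zero,
      hsum, map_zero, LinearMap.zero_apply, add_zero, map_smul, smul_eq_mul] at h
    rw [h, show (i + 1 : ℤ) = (i + 1 : ℕ) by push_cast; rfl, ichoose_natCast, Int.cast_natCast]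
  calc ψ (X 1 0) (X a 0) = ∑ i ∈ Finset.range a, (a.choose (i + 1) : F) * ψ (X 1 0) (X a 0) := by
        rw [← Finset.sum_mul, sum_range_choose_succ_eq_one F ha, one_mul]
    _ = ∑ i ∈ Finset.range a, ψ (g i) (g (a - 1 - i)) := (Finset.sum_congr rfl key).symm
    _ = 0 := hψ.isAlt.sum_range_reflect_eq_zero g a

lemma apply_X_one_zero_eq_zero (hX : IsHamiltonianFrame F n₁ n₂ X)
    (B : Module.Basis (HamIndex n₁ n₂) F L) (hB : ∀ v, B v = X v.1.1 v.1.2)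
    (hψ : IsTwoCocycle ψ)
    (hN : ∀ k l, 0 ≤ k → k < 2 ^ n₁ → 1 ≤ l → l < 2 ^ n₂ → ψ (X 1 0) (X k l) = 0) :
    ψ (X 1 0) = 0 := by
  refine linearMap_eq_zero_of_apply_X B hB fun k l ⟨hk, hk', hl, hl', hkl⟩ => ?_
  rcases hl.eq_or_lt with rfl | hl
  · lift k to ℕ using hk
    exact hX.apply_X_one_zero_X_zero_eq_zero hψ (by omega) hk'
  · exact hN k l hk hk' hl hl'

lemma apply_X_zero_X_add (hX : IsHamiltonianFrame F n₁ n₂ X) (hψ : IsTwoCocycle ψ)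
    (hx : ψ (X 1 0) = 0) {j k l r : ℤ} (hr : 0 ≤ r) (hj : 0 ≤ j) (hjr : j + r < 2 ^ n₂)
    (hk : 0 ≤ k) (hk' : k < 2 ^ n₁) (hl : -1 ≤ l) (hkl : 0 < k ∨ 0 ≤ l) (hlr : l + r < 2 ^ n₂) :
    ψ (X 0 j) (X k (l + r)) = ψ (X 0 (j + r)) (X k l) := by
  induction r, hr using Int.leInduction generalizing j with
  | base => simp
  | succ r hr ih =>
    have hxj : ⁅X 1 0, X 0 (j + 1)⁆ = X 0 j := by
      rw [hX.lie_X_one_zero (by unfold IsHamIndex; omega), add_sub_cancel_right]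
    have hxk : ⁅X 1 0, X k (l + (r + 1))⁆ = X k (l + r) := by
      rw [hX.lie_X_one_zero (by unfold IsHamIndex; omega), ← add_assoc, add_sub_cancel_right]
    rw [← hxj, hψ.apply_lie_of_apply_eq_zero hx, hxk, CharTwo.neg_eq,
      ih (by omega) (by omega) (by omega), add_right_comm, add_assoc]

lemma apply_X_zero_one_X_zero_eq_zero (hX : IsHamiltonianFrame F n₁ n₂ X)
    (hψ : IsTwoCocycle ψ) (hx : ψ (X 1 0) = 0) {l : ℤ} (hl : 1 ≤ l) (hl' : l < 2 ^ n₂) :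
    ψ (X 0 1) (X 0 l) = 0 := by
  have := hX.two_le_pow_left
  rcases Int.even_or_odd l with hev | ⟨m, rfl⟩
  · have h := hψ.lie_apply (X 1 1) (X 0 1) (X 0 l)
    rw [hX.lie_X_one_one le_rfl (by omega), hX.lie_X_zero_one (by unfold IsHamIndex; omega),
      hX.eq_zero (0 - 1) l (by omega), hX.lie_X_one_one hl hl', CharTwo.intCast_eq_ite l,
      if_pos hev] at h
    simpa using h
  -- for odd `l = 2m+1`, slide to the diagonal `ψ (X 0 (m+1)) (X 0 (m+1))`
  · have h := hX.apply_X_zero_X_add hψ hx (j := 1) (k := 0) (l := m + 1) (r := m) (by omega)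
      (by omega) (by omega) le_rfl (by omega) (by omega) (by omega) (by omega)
    rw [show m + 1 + m = 2 * m + 1 by ring, add_comm 1 m] at h
    rw [h, hψ.isAlt.self_eq_zero]

lemma apply_X_zero_one_X_two_pow_sub_two_eq_zero (hX : IsHamiltonianFrame F n₁ n₂ X)
    (hψ : IsTwoCocycle ψ) (hx : ψ (X 1 0) = 0) {a : ℕ} (ha : a ≠ 0) (ha' : (a : ℤ) < 2 ^ n₁) :
    ψ (X 0 1) (X a (2 ^ n₂ - 2)) = 0 := by
  have := hX.two_le_pow_right
  have hm : Even ((2 : ℤ) ^ n₂ - 2) :=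
    (Int.even_pow.2 ⟨even_two, hX.pos_right.ne'⟩).sub even_two
  set W := ψ (X 0 1) (X a (2 ^ n₂ - 2))
  set t : ℕ → F := fun i => ψ (X i 1) (X (a - i) (2 ^ n₂ - 2))
  have step : ∀ i ∈ Finset.range a, t i - t (i + 1) = (a.choose (i + 1) : F) * W := by
    intro i hi
    rw [Finset.mem_range] at hi
    have h := hψ.lie_apply (X 0 1) (X (i + 1) 1) (X (a - i) (2 ^ n₂ - 2))
    rw [hX.lie_X_zero_one (by unfold IsHamIndex; omega), add_sub_cancel_right,
      hX.lie_X_one_of_even (by omega) (by omega) (by unfold IsHamIndex; omega) hm,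
      hX.lie_X_zero_one (by unfold IsHamIndex; omega), show (i + 1 : ℤ) + (a - i) - 1 = a by ring,
      map_smul, smul_eq_mul, hψ.apply_comm (X (a - i - 1) _),
      show (a - i - 1 : ℤ) = a - (i + 1 : ℕ) by push_cast; ring,
      show (i + 1 : ℤ) = (i + 1 : ℕ) by push_cast; rfl, ichoose_natCast, Int.cast_natCast] at h
    simp only [t]
    linear_combination h
  have htel : t 0 - t a = W := by
    rw [← Finset.sum_range_sub', Finset.sum_congr rfl step, ← Finset.sum_mul,
      sum_range_choose_succ_eq_one F ha, one_mul]
  have ht0 : t 0 = W := by simp [t, W]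
  -- both ends slide to `ψ (X 0 (2^n₂-1)) (X a 0)`
  have hta : t a = W := by
    have h₁ := hX.apply_X_zero_X_add hψ hx (j := 2 ^ n₂ - 2) (k := a) (l := 0) (r := 1) (by omega)
      (by omega) (by omega) (by omega) ha' (by omega) (by omega) (by omega)
    have h₂ := hX.apply_X_zero_X_add hψ hx (j := 1) (k := a) (l := 0) (r := 2 ^ n₂ - 2)
      (by omega) (by omega) (by omega) (by omega) ha' (by omega) (by omega) (by omega)
    rw [zero_add, add_comm] at h₁
    rw [zero_add] at h₂
    simp only [t, W, sub_self]
    rw [hψ.apply_comm, h₁, h₂]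
  linear_combination ht0 - htel - hta

lemma apply_X_zero_one_eq_zero (hX : IsHamiltonianFrame F n₁ n₂ X)
    (B : Module.Basis (HamIndex n₁ n₂) F L) (hB : ∀ v, B v = X v.1.1 v.1.2)
    (hψ : IsTwoCocycle ψ) (hx : ψ (X 1 0) = 0)
    (hN : ∀ k, 1 ≤ k → k < 2 ^ n₁ → ψ (X 0 1) (X k (2 ^ n₂ - 1)) = 0) :
    ψ (X 0 1) = 0 := by
  refine linearMap_eq_zero_of_apply_X B hB fun k l ⟨hk, hk', hl, hl', hkl⟩ => ?_
  rcases hk.eq_or_lt with rfl | hk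
  · exact hX.apply_X_zero_one_X_zero_eq_zero hψ hx (by omega) hl'
  obtain hlow | rfl | rfl : l ≤ 2 ^ n₂ - 3 ∨ l = 2 ^ n₂ - 2 ∨ l = 2 ^ n₂ - 1 := by omega
  -- slide the whole degree `l` to the left argument, leaving `X k (-1) = 0`
  · have h := hX.apply_X_zero_X_add hψ hx (j := 1) (k := k) (l := -1) (r := l + 1) (by omega)
      (by omega) (by omega) hk.le hk' le_rfl (.inl hk) (by omega)
    rwa [hX.eq_zero k (-1) (by omega), map_zero, show -1 + (l + 1) = l by ring] at h
  · lift k to ℕ using hk.le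
    exact hX.apply_X_zero_one_X_two_pow_sub_two_eq_zero hψ hx (by omega) hk'
  · exact hN k hk hk'

lemma X_mem_lieSpan (hX : IsHamiltonianFrame F n₁ n₂ X) (k l : ℤ) :
    X k l ∈ LieSubalgebra.lieSpan F L {X 1 0, X 0 1} := by
  have := hX.two_le_pow_left
  have := hX.two_le_pow_right
  set S := LieSubalgebra.lieSpan F L {X 1 0, X 0 1}
  have hx : X 1 0 ∈ S := LieSubalgebra.subset_lieSpan (by simp)
  have hy : X 0 1 ∈ S := LieSubalgebra.subset_lieSpan (by simp)
  have hout : ∀ i j : ℤ, (i < 0 ∨ j < 0 ∨ 2 ^ n₁ ≤ i ∨ 2 ^ n₂ ≤ j) → X i j ∈ S :=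
    fun i j h => hX.eq_zero i j h ▸ S.zero_mem
  have htop : ∀ i ≤ 2 ^ n₁ - 1, X i (2 ^ n₂ - 1) ∈ S := by
    intro i hi
    induction i, hi using Int.leInductionDown with
    | base =>
      have hxy : ⁅X 1 0, X 0 1⁆ = X (2 ^ n₁ - 1) (2 ^ n₂ - 1) := by
        rw [hX.lie_X_one_zero (by unfold IsHamIndex; omega), sub_self, hX.zero_zero]
      exact hxy ▸ S.lie_mem hx hy
    | pred i hi ih =>
      by_cases hi₀ : 0 < i
      · rw [← hX.lie_X_zero_one (by unfold IsHamIndex; omega)]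
        exact S.lie_mem hy ih
      · exact hout _ _ (by omega)
  have hbox : ∀ i ≤ 2 ^ n₁ - 1, ∀ j ≤ 2 ^ n₂ - 1, X i j ∈ S := by
    intro i hi j hj
    induction j, hj using Int.leInductionDown with
    | base => exact htop i hi
    | pred j hj ih =>
      by_cases hij : 0 ≤ i ∧ 0 < j
      · rw [← hX.lie_X_one_zero (by unfold IsHamIndex; omega)]
        exact S.lie_mem hx ih
      · exact hout _ _ (by omega)
  by_cases hkl : k ≤ 2 ^ n₁ - 1 ∧ l ≤ 2 ^ n₂ - 1
  · exact hbox k hkl.1 l hkl.2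
  · exact hout k l (by omega)

theorem isTwoCocycle_eq_zero (hX : IsHamiltonianFrame F n₁ n₂ X)
    (B : Module.Basis (HamIndex n₁ n₂) F L) (hB : ∀ v, B v = X v.1.1 v.1.2)
    (hψ : IsTwoCocycle ψ)
    (hN₁ : ∀ k l, 0 ≤ k → k < 2 ^ n₁ → 1 ≤ l → l < 2 ^ n₂ → ψ (X 1 0) (X k l) = 0)
    (hN₂ : ∀ k, 1 ≤ k → k < 2 ^ n₁ → ψ (X 0 1) (X k (2 ^ n₂ - 1)) = 0) :
    ψ = 0 := by
  have hx := hX.apply_X_one_zero_eq_zero B hB hψ hN₁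
  have hy := hX.apply_X_zero_one_eq_zero B hB hψ hx hN₂
  have hgen : LieSubalgebra.lieSpan F L {X 1 0, X 0 1} ≤ hψ.radical :=
    LieSubalgebra.lieSpan_le.2 (Set.insert_subset_iff.2 ⟨hx, Set.singleton_subset_iff.2 hy⟩)
  exact linearMap_eq_zero_of_apply_X B hB fun k l _ => hgen (hX.X_mem_lieSpan k l)

lemma exists_functional_normalizing (hX : IsHamiltonianFrame F n₁ n₂ X)
    (B : Module.Basis (HamIndex n₁ n₂) F L) (hB : ∀ v, B v = X v.1.1 v.1.2) (α β : L → F) :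
    ∃ f : L →ₗ[F] F,
      (∀ k l, 0 ≤ k → k < 2 ^ n₁ → 1 ≤ l → l < 2 ^ n₂ → f ⁅X 1 0, X k l⁆ = α (X k l)) ∧
      ∀ k, 1 ≤ k → k < 2 ^ n₁ → f ⁅X 0 1, X k (2 ^ n₂ - 1)⁆ = β (X k (2 ^ n₂ - 1)) := by
  have := hX.two_le_pow_left
  have := hX.two_le_pow_right
  obtain ⟨f, hf⟩ := exists_linearMap_apply_X B hB fun k l =>
    if l < 2 ^ n₂ - 1 then α (X k (l + 1))
    else if k < 2 ^ n₁ - 1 then β (X (k + 1) l) else α (X 0 1)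
  refine ⟨f, fun k l hk hk' hl hl' => ?_, fun k hk hk' => ?_⟩
  · rw [hX.lie_X_one_zero (by unfold IsHamIndex; omega)]
    by_cases h₀ : k = 0 ∧ l = 1
    · obtain ⟨rfl, rfl⟩ := h₀
      rw [sub_self, hX.zero_zero, hf _ _ (by unfold IsHamIndex; omega), if_neg (by omega),
        if_neg (by omega)]
    · rw [hf _ _ (by unfold IsHamIndex; omega), if_pos (by omega), sub_add_cancel]
  · rw [hX.lie_X_zero_one (by unfold IsHamIndex; omega), hf _ _ (by unfold IsHamIndex; omega),
      if_neg (by omega), if_pos (by omega), sub_add_cancel]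

end IsHamiltonianFrame

/-- In characteristic two, every 2-cocycle of `L = H(2:(n₁,n₂);ω₂)`
with values in the trivial module is a 2-coboundary; that is, `H²(L,F) = 0`. -/
theorem stmt_10 (n₁ n₂ : ℕ) (hn₁ : 0 < n₁) (hn₂ : 0 < n₂)
    (F : Type*) [Field F] [CharP F 2]
    (L : Type*) [LieRing L] [LieAlgebra F L]
    (X : ℤ → ℤ → L)
    (hX0 : ∀ i j : ℤ, (i < 0 ∨ j < 0 ∨ (2 : ℤ) ^ n₁ ≤ i ∨ (2 : ℤ) ^ n₂ ≤ j) → X i j = 0)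
    (hXe : X 0 0 = X ((2 : ℤ) ^ n₁ - 1) ((2 : ℤ) ^ n₂ - 1))
    (B : Module.Basis {ij : ℕ × ℕ // ij.1 < 2 ^ n₁ ∧ ij.2 < 2 ^ n₂ ∧ ij ≠ (0, 0)} F L)
    (hB : ∀ v, B v = X v.1.1 v.1.2)
    (hbr : ∀ i j k l : ℤ, 0 ≤ i → i < (2 : ℤ) ^ n₁ → 0 ≤ j → j < (2 : ℤ) ^ n₂ →
      ¬(i = 0 ∧ j = 0) → 0 ≤ k → k < (2 : ℤ) ^ n₁ → 0 ≤ l → l < (2 : ℤ) ^ n₂ →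
      ¬(k = 0 ∧ l = 0) →
      ⁅X i j, X k l⁆ = (hamN i j k l : F) • X (i + k - 1) (j + l - 1)) :
    ∀ φ : L →ₗ[F] L →ₗ[F] F, IsTwoCocycle φ → IsTwoCoboundary φ := by
  intro φ hφ
  have hX : IsHamiltonianFrame F n₁ n₂ X :=
    ⟨hn₁, hn₂, hX0, hXe, fun i j k l ⟨h₁, h₂, h₃, h₄, h₅⟩ ⟨h₆, h₇, h₈, h₉, h₁₀⟩ =>
      hbr i j k l h₁ h₂ h₃ h₄ h₅ h₆ h₇ h₈ h₉ h₁₀⟩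
  obtain ⟨f, hfx, hfy⟩ := hX.exists_functional_normalizing B hB (φ (X 1 0)) (φ (X 0 1))
  have hψ : φ - lieCoboundary f = 0 := hX.isTwoCocycle_eq_zero B hB (hφ.sub_lieCoboundary f)
    (fun k l hk hk' hl hl' => by simp [hfx k l hk hk' hl hl'])
    (fun k hk hk' => by simp [hfy k hk hk'])
  exact ⟨f, fun u v => by simpa [sub_eq_zero] using LinearMap.congr_fun₂ hψ u v⟩
end

section
/- Let F be a field of characteristic 2 and n a positive integer. Let W' be the Lie algebra over F with basis E_i for i = −1, 0, …, 2^{n+1}−3, and bracket [E_i, E_j] = (C(i+j+1,j) − C(i+j+1,i))·E_{i+j} (coefficients taken modulo 2), with the convention E_k = 0 for k < −1 or k > 2^{n+1}−3 (W' is the simple Zassenhaus algebra of dimension 2^{n+1}−1, the derived subalgebra of W(1:n+1)). Then the F-linear map H(2:(1,n);ω₂) → W' defined on basis elements by x·y^{(j)} ↦ E_{j−1} for 0 ≤ j ≤ 2^n−1 and y^{(j)} ↦ E_{j+2^n−2} for 1 ≤ j ≤ 2^n−1 is an isomorphism of Lie algebras. -/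
/-! In characteristic 2 every bracket of either algebra is a single binomial coefficient times a
basis vector: Pascal's rule turns `[E_{a-1}, E_{b-1}]` into `C(a+b, a) E_{a+b-2}`, and the
Hamiltonian brackets `[x y^{(j)}, x y^{(l)}]`, `[x y^{(j)}, y^{(l)}]` into `C(j+l, j)` and
`C(j+l-1, j)` times the monomial of `y`-degree `j+l-1`. The images of `y^{(l)}` sit `2^n - 1` places
higher, and `(1+X)^{2^n} = 1 + X^{2^n}` gives `C(2^n + m, j) ≡ C(m, j)` for `j < 2^n`, which matches
the two families of coefficients and also kills the coefficients of those brackets in `W'` whose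
counterpart in `L` falls outside the range of `y`-degrees. -/

open Polynomial in
theorem Nat.cast_choose_pow_add {R : Type*} [CommSemiring R] {p : ℕ} [ExpChar R p] (N m : ℕ)
    {j : ℕ} (hj : j < p ^ N) : ((p ^ N + m).choose j : R) = m.choose j := by
  have h : ((X + 1 : R[X]) ^ (p ^ N + m)).coeff j = ((X ^ p ^ N + 1) * (X + 1) ^ m).coeff j := by
    rw [pow_add, add_pow_expChar_pow, one_pow]
  rwa [coeff_X_add_one_pow, add_mul, coeff_add, coeff_X_pow_mul', if_neg hj.not_ge, zero_add,
    one_mul, coeff_X_add_one_pow] at h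

lemma ichoose_of_neg_right_s14 (a : ℤ) {b : ℤ} (hb : b < 0) : ichoose a b = 0 := by
  simp [ichoose, hb.not_ge]

lemma ichoose_of_lt {a b : ℤ} (h : a < b) : ichoose a b = 0 := by
  unfold ichoose
  split_ifs with h0
  · rw [Nat.choose_eq_zero_of_lt (by omega), Nat.cast_zero]
  · rfl

lemma ichoose_self {a : ℤ} (ha : 0 ≤ a) : ichoose a a = 1 := by
  simp [ichoose, ha]

lemma ichoose_zero_right_s14 {a : ℤ} (ha : 0 ≤ a) : ichoose a 0 = 1 := by
  simp [ichoose, ha]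

lemma ichoose_sub {a : ℤ} (ha : 0 ≤ a) (b : ℤ) : ichoose a (a - b) = ichoose a b := by
  lift a to ℕ using ha
  rcases lt_or_ge b 0 with hb | hb
  · rw [ichoose_of_neg_right_s14 _ hb, ichoose_of_lt (by omega)]
  rcases le_or_gt b a with hba | hba
  · lift b to ℕ using hb
    rw [← Nat.cast_sub (by omega), ichoose_natCast, ichoose_natCast, Nat.choose_symm (by omega)]
  · rw [ichoose_of_lt hba, ichoose_of_neg_right_s14 _ (by omega)]

lemma ichoose_add_one {a : ℤ} (ha : 0 ≤ a) (b : ℤ) :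
    ichoose (a + 1) b = ichoose a b + ichoose a (b - 1) := by
  lift a to ℕ using ha
  rcases lt_trichotomy b 0 with hb | rfl | hb
  · simp [ichoose_of_neg_right_s14 _ hb, ichoose_of_neg_right_s14 _ (show b - 1 < 0 by omega)]
  · rw [ichoose_zero_right_s14 (by omega), ichoose_zero_right_s14 (by omega),
      ichoose_of_neg_right_s14 _ (by omega), add_zero]
  · obtain ⟨c, rfl⟩ : ∃ c : ℕ, b = c + 1 := ⟨(b - 1).toNat, by omega⟩
    rw [add_sub_cancel_right, ← Nat.cast_one, ← Nat.cast_add, ← Nat.cast_add, ichoose_natCast,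
      ichoose_natCast, ichoose_natCast, Nat.choose_succ_succ', Nat.cast_add, add_comm]

lemma cast_ichoose_pow_add {R : Type*} [CommRing R] {p : ℕ} [ExpChar R p] (N : ℕ) {m j : ℤ}
    (hm : 0 ≤ m) (hj : j < p ^ N) : (ichoose (p ^ N + m) j : R) = ichoose m j := by
  rcases lt_or_ge j 0 with hj0 | hj0
  · simp [ichoose_of_neg_right_s14 _ hj0]
  lift m to ℕ using hm
  lift j to ℕ using hj0
  rw [← Nat.cast_pow, ← Nat.cast_add, ichoose_natCast, ichoose_natCast, Int.cast_natCast,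
    Int.cast_natCast, Nat.cast_choose_pow_add N m (by exact_mod_cast hj)]

theorem LinearMap.map_lie_of_basis {R L M ι : Type*} [CommRing R] [LieRing L] [LieAlgebra R L]
    [LieRing M] [LieAlgebra R M] (f : L →ₗ[R] M) (b : Module.Basis ι R L)
    (h : ∀ i j, f ⁅b i, b j⁆ = ⁅f (b i), f (b j)⁆) (x y : L) : f ⁅x, y⁆ = ⁅f x, f y⁆ := by
  have key : ((LieModule.toEnd R L L : L →ₗ[R] L →ₗ[R] L)).compr₂ f =
      ((LieModule.toEnd R M M : M →ₗ[R] M →ₗ[R] M)).compl₁₂ f f :=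
    LinearMap.ext_basis b b h
  exact LinearMap.congr_fun₂ key x y

section

variable (F : Type*) [CommRing F] {L W : Type*} [LieRing L] [LieAlgebra F L] [LieRing W]
  [LieAlgebra F W] (n : ℕ)

def IsHamiltonianBracket (X : ℤ → ℤ → L) : Prop :=
  ∀ i j k l : ℤ, 0 ≤ i → i < (2 : ℤ) ^ 1 → 0 ≤ j → j < (2 : ℤ) ^ n →
    ¬(i = 0 ∧ j = 0) → 0 ≤ k → k < (2 : ℤ) ^ 1 → 0 ≤ l → l < (2 : ℤ) ^ n →
    ¬(k = 0 ∧ l = 0) → ⁅X i j, X k l⁆ = (hamN i j k l : F) • X (i + k - 1) (j + l - 1)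

def IsZassenhausBracket (E : ℤ → W) : Prop :=
  ∀ i j : ℤ, -1 ≤ i → i ≤ (2 : ℤ) ^ (n + 1) - 3 → -1 ≤ j → j ≤ (2 : ℤ) ^ (n + 1) - 3 →
    ⁅E i, E j⁆ = ((ichoose (i + j + 1) j - ichoose (i + j + 1) i : ℤ) : F) • E (i + j)

end

def hamIndexEquiv (n : ℕ) :
    {ij : ℕ × ℕ // ij.1 < 2 ^ 1 ∧ ij.2 < 2 ^ n ∧ ij ≠ (0, 0)} ≃ Fin (2 ^ (n + 1) - 1) where
  toFun u := ⟨if u.1.1 = 1 then u.1.2 else u.1.2 + 2 ^ n - 1, by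
    obtain ⟨⟨i, j⟩, hi, hj, hij⟩ := u
    have : 2 ^ (n + 1) = 2 * 2 ^ n := by ring
    dsimp only
    split_ifs <;> omega⟩
  invFun t := if h : (t : ℕ) < 2 ^ n then ⟨(1, t), by simp [h]⟩ else
    ⟨(0, t + 1 - 2 ^ n), by
      have : 2 ^ (n + 1) = 2 * 2 ^ n := by ring
      simp only [ne_eq, Prod.mk.injEq]; omega⟩
  left_inv := by
    rintro ⟨⟨i, j⟩, hi, hj, hij⟩
    simp only [ne_eq, Prod.mk.injEq, pow_one] at hij hi hj
    apply Subtype.ext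
    dsimp only
    split_ifs <;> simp only [Prod.mk.injEq, and_true] <;> omega
  right_inv := by
    intro t
    have : 2 ^ (n + 1) = 2 * 2 ^ n := by ring
    ext
    dsimp only
    split_ifs <;> simp_all; omega

lemma exists_linearEquiv_X_eq_E {F L W : Type*} [CommRing F] [AddCommGroup L] [Module F L]
    [AddCommGroup W] [Module F W] {n : ℕ} {X : ℤ → ℤ → L} {E : ℤ → W}
    (B : Module.Basis {ij : ℕ × ℕ // ij.1 < 2 ^ 1 ∧ ij.2 < 2 ^ n ∧ ij ≠ (0, 0)} F L)
    (hB : ∀ v, B v = X v.1.1 v.1.2) (BE : Module.Basis (Fin (2 ^ (n + 1) - 1)) F W)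
    (hBE : ∀ t : Fin (2 ^ (n + 1) - 1), BE t = E ((t : ℤ) - 1)) :
    ∃ φ : L ≃ₗ[F] W, (∀ j : ℤ, 0 ≤ j → j < 2 ^ n → φ (X 1 j) = E (j - 1)) ∧
      ∀ j : ℤ, 1 ≤ j → j < 2 ^ n → φ (X 0 j) = E (j + 2 ^ n - 2) := by
  refine ⟨B.equiv BE (hamIndexEquiv n), fun j hj hj' => ?_, fun j hj hj' => ?_⟩
  · lift j to ℕ using hj
    have hu : X 1 j = B ⟨(1, j), by norm_num, by exact_mod_cast hj', by simp⟩ := by simp [hB]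
    rw [hu, Module.Basis.equiv_apply, hBE]
    simp [hamIndexEquiv]
  · lift j to ℕ using (by omega : (0 : ℤ) ≤ j)
    have hu : X 0 j = B ⟨(0, j), by norm_num, by exact_mod_cast hj', by simp; omega⟩ := by
      simp [hB]
    rw [hu, Module.Basis.equiv_apply, hBE]
    simp [hamIndexEquiv, sub_sub, one_add_one_eq_two]

section

variable {F : Type*} [CommRing F] {L W : Type*} [LieRing L] [LieAlgebra F L] [LieRing W]
  [LieAlgebra F W] {n : ℕ} {X : ℤ → ℤ → L} {E : ℤ → W}

lemma IsHamiltonianBracket.lie_zero_zero (hX : IsHamiltonianBracket F n X) {j l : ℤ}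
    (hj : 1 ≤ j) (hj' : j < 2 ^ n) (hl : 1 ≤ l) (hl' : l < 2 ^ n) : ⁅X 0 j, X 0 l⁆ = 0 := by
  rw [hX 0 j 0 l le_rfl (by norm_num) (by omega) hj' (by omega) le_rfl (by norm_num) (by omega)
    hl' (by omega)]
  simp [hamN, ichoose]

lemma map_lie_X_zero_zero (hX : IsHamiltonianBracket F n X) (hE : IsZassenhausBracket F n E)
    (hE0 : ∀ i : ℤ, i < -1 ∨ (2 : ℤ) ^ (n + 1) - 3 < i → E i = 0)
    (φ : L →ₗ[F] W) (hφ0 : ∀ j : ℤ, 0 ≤ j → j < 2 ^ n → φ (X 0 j) = E (j + 2 ^ n - 2))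
    {j l : ℤ} (hj : 1 ≤ j) (hj' : j < 2 ^ n) (hl : 1 ≤ l) (hl' : l < 2 ^ n) :
    φ ⁅X 0 j, X 0 l⁆ = ⁅φ (X 0 j), φ (X 0 l)⁆ := by
  have h2n : (2 : ℤ) ^ (n + 1) = 2 * 2 ^ n := by ring
  rw [hX.lie_zero_zero hj hj' hl hl', map_zero, hφ0 j (by omega) hj', hφ0 l (by omega) hl',
    hE _ _ (by omega) (by omega) (by omega) (by omega), hE0 _ (by omega), smul_zero]

end

section CharTwo

variable {F : Type*} [Field F] [CharP F 2] {L W : Type*} [LieRing L] [LieAlgebra F L] [LieRing W]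
  [LieAlgebra F W] {n : ℕ} {X : ℤ → ℤ → L} {E : ℤ → W}

lemma IsZassenhausBracket.lie_sub_one (hE : IsZassenhausBracket F n E) {a b : ℤ} (ha : 0 ≤ a)
    (ha' : a ≤ 2 ^ (n + 1) - 2) (hb : 0 ≤ b) (hb' : b ≤ 2 ^ (n + 1) - 2) (hab : 0 < a + b) :
    ⁅E (a - 1), E (b - 1)⁆ = (ichoose (a + b) a : F) • E (a + b - 2) := by
  have hsymm : ichoose (a + b - 1) (b - 1) = ichoose (a + b - 1) a := by
    rw [← ichoose_sub (by omega) (b - 1), sub_sub_sub_cancel_right, add_sub_cancel_right]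
  have hpascal : ichoose (a + b) a = ichoose (a + b - 1) a + ichoose (a + b - 1) (a - 1) := by
    simpa using ichoose_add_one (a := a + b - 1) (by omega) a
  rw [hE _ _ (by omega) (by omega) (by omega) (by omega),
    show a - 1 + (b - 1) + 1 = a + b - 1 by ring, show a - 1 + (b - 1) = a + b - 2 by ring,
    hsymm, hpascal, Int.cast_sub, Int.cast_add, CharTwo.sub_eq_add]

lemma IsHamiltonianBracket.lie_one_zero (hX : IsHamiltonianBracket F n X) {j l : ℤ}
    (hj : 0 ≤ j) (hj' : j < 2 ^ n) (hl : 1 ≤ l) (hl' : l < 2 ^ n) :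
    ⁅X 1 j, X 0 l⁆ = (ichoose (j + l - 1) j : F) • X 0 (j + l - 1) := by
  rw [hX 1 j 0 l zero_le_one (by norm_num) hj hj' (by omega) le_rfl (by norm_num) (by omega)
    hl' (by omega)]
  simp [hamN, ichoose_of_lt, ichoose_self, CharTwo.neg_eq]

lemma IsHamiltonianBracket.lie_one_one (hX : IsHamiltonianBracket F n X) {j l : ℤ}
    (hj : 0 ≤ j) (hj' : j < 2 ^ n) (hl : 0 ≤ l) (hl' : l < 2 ^ n) (hjl : 0 < j + l) :
    ⁅X 1 j, X 1 l⁆ = (ichoose (j + l) j : F) • X 1 (j + l - 1) := by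
  have hpascal : ichoose (j + l) j = ichoose (j + l - 1) j + ichoose (j + l - 1) (j - 1) := by
    simpa using ichoose_add_one (a := j + l - 1) (by omega) j
  rw [hX 1 j 1 l zero_le_one (by norm_num) hj hj' (by omega) zero_le_one (by norm_num) hl hl'
    (by omega), hpascal]
  simp [hamN, ichoose_self, ichoose_zero_right_s14, CharTwo.sub_eq_add, add_comm]

lemma map_lie_X_one_one (hX : IsHamiltonianBracket F n X) (hE : IsZassenhausBracket F n E)
    (hX0 : ∀ i j : ℤ, (i < 0 ∨ j < 0 ∨ (2 : ℤ) ^ 1 ≤ i ∨ (2 : ℤ) ^ n ≤ j) → X i j = 0)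
    (φ : L →ₗ[F] W) (hφ1 : ∀ j : ℤ, 0 ≤ j → j < 2 ^ n → φ (X 1 j) = E (j - 1))
    {j l : ℤ} (hj : 0 ≤ j) (hj' : j < 2 ^ n) (hl : 0 ≤ l) (hl' : l < 2 ^ n) :
    φ ⁅X 1 j, X 1 l⁆ = ⁅φ (X 1 j), φ (X 1 l)⁆ := by
  have h2n : (2 : ℤ) ^ (n + 1) = 2 * 2 ^ n := by ring
  rcases (add_nonneg hj hl).eq_or_lt with hjl | hjl
  · obtain ⟨rfl, rfl⟩ : j = 0 ∧ l = 0 := by omega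
    simp only [lie_self, map_zero]
  rw [hX.lie_one_one hj hj' hl hl' hjl, map_smul, hφ1 j hj hj', hφ1 l hl hl',
    hE.lie_sub_one hj (by omega) hl (by omega) hjl]
  by_cases hm : j + l - 1 < 2 ^ n
  · rw [hφ1 _ (by omega) hm, sub_sub, one_add_one_eq_two]
  · have hcoeff : (ichoose (j + l) j : F) = 0 := by
      have h := cast_ichoose_pow_add (R := F) (p := 2) n (m := j + l - 2 ^ n) (by omega)
        (j := j) (by exact_mod_cast hj')
      rwa [Nat.cast_ofNat, add_sub_cancel, ichoose_of_lt (a := j + l - 2 ^ n) (by omega),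
        Int.cast_zero] at h
    rw [hX0 1 _ (by omega), hcoeff, map_zero, smul_zero, zero_smul]

lemma map_lie_X_one_zero (hX : IsHamiltonianBracket F n X) (hE : IsZassenhausBracket F n E)
    (hX0 : ∀ i j : ℤ, (i < 0 ∨ j < 0 ∨ (2 : ℤ) ^ 1 ≤ i ∨ (2 : ℤ) ^ n ≤ j) → X i j = 0)
    (hE0 : ∀ i : ℤ, i < -1 ∨ (2 : ℤ) ^ (n + 1) - 3 < i → E i = 0)
    (φ : L →ₗ[F] W) (hφ1 : ∀ j : ℤ, 0 ≤ j → j < 2 ^ n → φ (X 1 j) = E (j - 1))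
    (hφ0 : ∀ j : ℤ, 0 ≤ j → j < 2 ^ n → φ (X 0 j) = E (j + 2 ^ n - 2))
    {j l : ℤ} (hj : 0 ≤ j) (hj' : j < 2 ^ n) (hl : 1 ≤ l) (hl' : l < 2 ^ n) :
    φ ⁅X 1 j, X 0 l⁆ = ⁅φ (X 1 j), φ (X 0 l)⁆ := by
  have h2n : (2 : ℤ) ^ (n + 1) = 2 * 2 ^ n := by ring
  have hcoeff := cast_ichoose_pow_add (R := F) (p := 2) n (m := j + l - 1) (by omega)
    (j := j) (by exact_mod_cast hj')
  rw [Nat.cast_ofNat] at hcoeff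
  rw [hX.lie_one_zero hj hj' hl hl', map_smul, hφ1 j hj hj', hφ0 l (by omega) hl',
    show l + 2 ^ n - 2 = l + 2 ^ n - 1 - 1 by ring,
    hE.lie_sub_one hj (by omega) (by omega) (by omega) (by omega),
    show j + (l + 2 ^ n - 1) = 2 ^ n + (j + l - 1) by ring, hcoeff]
  by_cases hm : j + l - 1 < 2 ^ n
  · rw [hφ0 _ (by omega) hm, add_comm (2 ^ n : ℤ)]
  · rw [hX0 0 _ (by omega), hE0 _ (by omega), map_zero, smul_zero]

lemma map_lie_basis (hX : IsHamiltonianBracket F n X) (hE : IsZassenhausBracket F n E)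
    (hX0 : ∀ i j : ℤ, (i < 0 ∨ j < 0 ∨ (2 : ℤ) ^ 1 ≤ i ∨ (2 : ℤ) ^ n ≤ j) → X i j = 0)
    (hE0 : ∀ i : ℤ, i < -1 ∨ (2 : ℤ) ^ (n + 1) - 3 < i → E i = 0)
    (B : Module.Basis {ij : ℕ × ℕ // ij.1 < 2 ^ 1 ∧ ij.2 < 2 ^ n ∧ ij ≠ (0, 0)} F L)
    (hB : ∀ v, B v = X v.1.1 v.1.2)
    (φ : L →ₗ[F] W) (hφ1 : ∀ j : ℤ, 0 ≤ j → j < 2 ^ n → φ (X 1 j) = E (j - 1))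
    (hφ0 : ∀ j : ℤ, 0 ≤ j → j < 2 ^ n → φ (X 0 j) = E (j + 2 ^ n - 2)) (u v) :
    φ ⁅B u, B v⁆ = ⁅φ (B u), φ (B v)⁆ := by
  obtain ⟨⟨i, j⟩, hi, hj, hij⟩ := u
  obtain ⟨⟨k, l⟩, hk, hl, hkl⟩ := v
  simp only [ne_eq, Prod.mk.injEq, pow_one] at hi hk hij hkl
  have hj' : (j : ℤ) < 2 ^ n := by exact_mod_cast hj
  have hl' : (l : ℤ) < 2 ^ n := by exact_mod_cast hl
  rw [hB, hB]
  interval_cases i <;> interval_cases k <;> simp only [Nat.cast_zero, Nat.cast_one]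
  · exact map_lie_X_zero_zero hX hE hE0 φ hφ0 (by omega) hj' (by omega) hl'
  · rw [← lie_skew, map_neg, map_lie_X_one_zero hX hE hX0 hE0 φ hφ1 hφ0 (by omega) hl'
      (by omega) hj', lie_skew]
  · exact map_lie_X_one_zero hX hE hX0 hE0 φ hφ1 hφ0 (by omega) hj' (by omega) hl'
  · exact map_lie_X_one_one hX hE hX0 φ hφ1 (by omega) hj' (by omega) hl'

end CharTwo

theorem stmt_14_general (n : ℕ)
    (F : Type*) [Field F] [CharP F 2]
    -- `L = H(2:(1,n);ω₂)` with `X i j` the monomial `x^{(i)}y^{(j)}`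
    (L : Type*) [LieRing L] [LieAlgebra F L]
    (X : ℤ → ℤ → L)
    (hX0 : ∀ i j : ℤ, (i < 0 ∨ j < 0 ∨ (2 : ℤ) ^ 1 ≤ i ∨ (2 : ℤ) ^ n ≤ j) → X i j = 0)
    (hXe : X 0 0 = X ((2 : ℤ) ^ 1 - 1) ((2 : ℤ) ^ n - 1))
    (B : Module.Basis {ij : ℕ × ℕ // ij.1 < 2 ^ 1 ∧ ij.2 < 2 ^ n ∧ ij ≠ (0, 0)} F L)
    (hB : ∀ v, B v = X v.1.1 v.1.2)
    (hbr : ∀ i j k l : ℤ, 0 ≤ i → i < (2 : ℤ) ^ 1 → 0 ≤ j → j < (2 : ℤ) ^ n →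
      ¬(i = 0 ∧ j = 0) → 0 ≤ k → k < (2 : ℤ) ^ 1 → 0 ≤ l → l < (2 : ℤ) ^ n →
      ¬(k = 0 ∧ l = 0) →
      ⁅X i j, X k l⁆ = (hamN i j k l : F) • X (i + k - 1) (j + l - 1))
    -- `W'`: the simple Zassenhaus algebra of dimension `2^{n+1} - 1`, with basis
    -- `E i`, `i = -1, 0, …, 2^{n+1} - 3`, and `E k = 0` outside this range
    (W' : Type*) [LieRing W'] [LieAlgebra F W']
    (E : ℤ → W')
    (hE0 : ∀ i : ℤ, i < -1 ∨ (2 : ℤ) ^ (n + 1) - 3 < i → E i = 0)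
    (BE : Module.Basis (Fin (2 ^ (n + 1) - 1)) F W')
    (hBE : ∀ t : Fin (2 ^ (n + 1) - 1), BE t = E ((t : ℤ) - 1))
    (hbrE : ∀ i j : ℤ, -1 ≤ i → i ≤ (2 : ℤ) ^ (n + 1) - 3 → -1 ≤ j → j ≤ (2 : ℤ) ^ (n + 1) - 3 →
      ⁅E i, E j⁆ = ((ichoose (i + j + 1) j - ichoose (i + j + 1) i : ℤ) : F) • E (i + j)) :
    ∃ φ : L ≃ₗ⁅F⁆ W',
      (∀ j : ℕ, j ≤ 2 ^ n - 1 → φ (X 1 j) = E ((j : ℤ) - 1)) ∧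
      (∀ j : ℕ, 1 ≤ j → j ≤ 2 ^ n - 1 → φ (X 0 j) = E ((j : ℤ) + 2 ^ n - 2)) := by
  obtain ⟨φ, hφ1, hφ0⟩ := exists_linearEquiv_X_eq_E B hB BE hBE
  have h2n : (1 : ℤ) ≤ 2 ^ n := one_le_pow₀ one_le_two
  have hφ0' : ∀ j : ℤ, 0 ≤ j → j < 2 ^ n → φ (X 0 j) = E (j + 2 ^ n - 2) := by
    intro j hj hj'
    rcases hj.eq_or_lt with rfl | hj
    -- `x^{(0)}y^{(0)}` is `x y^{(2^n-1)}`, which is sent to `E_{2^n-2}`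
    · rw [hXe, show (2 : ℤ) ^ 1 - 1 = 1 by norm_num, hφ1 _ (by omega) (by omega)]
      congr 1
      ring
    · exact hφ0 j hj hj'
  have hlie := (φ : L →ₗ[F] W').map_lie_of_basis B
    (map_lie_basis hbr hbrE hX0 hE0 B hB φ hφ1 hφ0')
  have hlt : ∀ j : ℕ, j ≤ 2 ^ n - 1 → (j : ℤ) < 2 ^ n := fun j hj => by
    have := Nat.one_le_two_pow (n := n)
    exact_mod_cast (by omega : j < 2 ^ n)
  exact ⟨{ φ with map_lie' := hlie _ _ }, fun j hj => hφ1 j (by positivity) (hlt j hj),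
    fun j hj hj' => hφ0 j (by exact_mod_cast hj) (hlt j hj')⟩

/-- In characteristic 2, the linear map `H(2:(1,n);ω₂) → W'` sending
`x·y^{(j)} ↦ E_{j-1}` (for `0 ≤ j ≤ 2^n - 1`) and `y^{(j)} ↦ E_{j+2^n-2}` (for
`1 ≤ j ≤ 2^n - 1`) is an isomorphism of Lie algebras onto the simple Zassenhaus algebra
`W'` of dimension `2^{n+1} - 1`. -/
theorem stmt_14 (n : ℕ) (hn : 0 < n)
    (F : Type*) [Field F] [CharP F 2]
    -- `L = H(2:(1,n);ω₂)` with `X i j` the monomial `x^{(i)}y^{(j)}`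
    (L : Type*) [LieRing L] [LieAlgebra F L]
    (X : ℤ → ℤ → L)
    (hX0 : ∀ i j : ℤ, (i < 0 ∨ j < 0 ∨ (2 : ℤ) ^ 1 ≤ i ∨ (2 : ℤ) ^ n ≤ j) → X i j = 0)
    (hXe : X 0 0 = X ((2 : ℤ) ^ 1 - 1) ((2 : ℤ) ^ n - 1))
    (B : Module.Basis {ij : ℕ × ℕ // ij.1 < 2 ^ 1 ∧ ij.2 < 2 ^ n ∧ ij ≠ (0, 0)} F L)
    (hB : ∀ v, B v = X v.1.1 v.1.2)
    (hbr : ∀ i j k l : ℤ, 0 ≤ i → i < (2 : ℤ) ^ 1 → 0 ≤ j → j < (2 : ℤ) ^ n →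
      ¬(i = 0 ∧ j = 0) → 0 ≤ k → k < (2 : ℤ) ^ 1 → 0 ≤ l → l < (2 : ℤ) ^ n →
      ¬(k = 0 ∧ l = 0) →
      ⁅X i j, X k l⁆ = (hamN i j k l : F) • X (i + k - 1) (j + l - 1))
    -- `W'`: the simple Zassenhaus algebra of dimension `2^{n+1} - 1`, with basis
    -- `E i`, `i = -1, 0, …, 2^{n+1} - 3`, and `E k = 0` outside this range
    (W' : Type*) [LieRing W'] [LieAlgebra F W']
    (E : ℤ → W')
    (hE0 : ∀ i : ℤ, i < -1 ∨ (2 : ℤ) ^ (n + 1) - 3 < i → E i = 0)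
    (BE : Module.Basis (Fin (2 ^ (n + 1) - 1)) F W')
    (hBE : ∀ t : Fin (2 ^ (n + 1) - 1), BE t = E ((t : ℤ) - 1))
    (hbrE : ∀ i j : ℤ, -1 ≤ i → i ≤ (2 : ℤ) ^ (n + 1) - 3 → -1 ≤ j → j ≤ (2 : ℤ) ^ (n + 1) - 3 →
      ⁅E i, E j⁆ = ((ichoose (i + j + 1) j - ichoose (i + j + 1) i : ℤ) : F) • E (i + j)) :
    ∃ φ : L ≃ₗ⁅F⁆ W',
      (∀ j : ℕ, j ≤ 2 ^ n - 1 → φ (X 1 j) = E ((j : ℤ) - 1)) ∧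
      (∀ j : ℕ, 1 ≤ j → j ≤ 2 ^ n - 1 → φ (X 0 j) = E ((j : ℤ) + 2 ^ n - 2)) :=
  stmt_14_general n F L X hX0 hXe B hB hbr W' E hE0 BE hBE hbrE
end

section
/- Let p be a prime, n a positive integer, r = p^n−2, and let F be a field containing F_{p^n}. Let W(1:n) be the Lie algebra over F with basis E_i for i = −1, 0, …, r, and bracket [E_i, E_j] = (C(i+j+1,j) − C(i+j+1,i))·E_{i+j} (coefficients taken modulo p), with the convention E_k = 0 for k < −1 or k > r. For α ∈ F_{p^n} set e_α = E_r + Σ_{i=−1}^{r} α^{i+1}·E_i, with the convention 0^0 = 1 (so e_0 = E_{−1} + E_r). Then [e_α, e_β] = (β − α)·e_{α+β} for all α, β ∈ F_{p^n}. -/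
/-!
Write `N = p ^ n`, `r = N - 2` and `e_α = E_r + P(α)` with `P(c) = ∑_{t<N} c^t E_{t-1}`.
Only `E_{-1}` and `E_0` bracket nontrivially with `E_r`, and since `r = -2` in `F` this gives
`[P(c), E_r] = E_{r-1} - 2c E_r`. In `[P(a), P(b)]` the coefficient of `E_{m-1}` is
`∑_{i+j=m+1} a^i b^j (C(m, j-1) - C(m, i-1)) = (b - a)(a + b)^m` by the binomial theorem,
except that for `m = N - 1` the two terms `(i, j) = (0, N), (N, 0)` fall outside the range of `P`;
they contribute `b^N - a^N = b - a` because `a, b ∈ F_{p^n}` are fixed by Frobenius.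
Collecting terms, `[e_a, e_b] = (b - a)(E_r + P(a + b))`.
-/

open Finset

lemma ichoose_natCast_s15 (n k : ℕ) : ichoose n k = n.choose k := by
  simp [ichoose]

lemma ichoose_of_neg {k : ℤ} (n : ℤ) (hk : k < 0) : ichoose n k = 0 := by
  simp [ichoose, hk.not_ge]

theorem sum_range_sum_range_pow_mul_pow_choose_smul {R M : Type*} [CommSemiring R]
    [AddCommMonoid M] [Module R M] (a b : R) {N : ℕ} (G : ℕ → M)
    (hG : ∀ m, N ≤ m → G m = 0) :
    ∑ t ∈ range N, ∑ s ∈ range N, (a ^ t * b ^ s * (t + s).choose t) • G (t + s) =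
      ∑ m ∈ range N, (a + b) ^ m • G m := by
  have h_triangle : ∀ t ∈ range N,
      ∑ s ∈ range N, (a ^ t * b ^ s * (t + s).choose t) • G (t + s) =
        ∑ s ∈ range (N - t), (a ^ t * b ^ s * (t + s).choose t) • G (t + s) := by
    intro t _
    refine (sum_subset (range_subset_range.2 (N.sub_le t)) fun s _ hs => ?_).symm
    rw [hG _ (by simp only [mem_range] at hs; omega), smul_zero]
  rw [sum_congr rfl h_triangle, ← sum_range_diag_flip]
  refine sum_congr rfl fun m _ => ?_
  rw [add_pow, sum_smul]
  refine sum_congr rfl fun k hk => ?_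
  rw [Nat.add_sub_cancel' (Nat.lt_succ_iff.1 (mem_range.1 hk))]

/-- `∑_{i=-1}^{N-2} c ^ (i + 1) • E i`, so that `e_c = E (N - 2) + zassenhausSum N E c`. -/
def zassenhausSum {R L : Type*} [CommRing R] [AddCommGroup L] [Module R L]
    (N : ℕ) (E : ℤ → L) (c : R) : L :=
  ∑ t ∈ range N, c ^ t • E ((t : ℤ) - 1)

theorem sum_range_sum_range_ichoose_smul {R M : Type*} [CommRing R] [AddCommGroup M]
    [Module R M] (a b : R) {N : ℕ} (hN : 0 < N) (E : ℤ → M)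
    (hE : ∀ i : ℤ, (N : ℤ) - 2 < i → E i = 0) :
    ∑ t ∈ range N, ∑ s ∈ range N,
        (a ^ t * b ^ s * (ichoose ((t : ℤ) + s - 1) ((s : ℤ) - 1) : R)) • E ((t : ℤ) + s - 2) =
      b • zassenhausSum N E (a + b) - b ^ N • E ((N : ℤ) - 2) := by
  set f : ℕ → ℕ → M := fun t s =>
    (a ^ t * b ^ s * (ichoose ((t : ℤ) + s - 1) ((s : ℤ) - 1) : R)) • E ((t : ℤ) + s - 2)
  have h_shift : ∀ t ∈ range N, ∑ s ∈ range N, f t s =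
      b • ∑ s ∈ range N, (a ^ t * b ^ s * (t + s).choose t) • E (((t + s : ℕ) : ℤ) - 1) -
        f t N := by
    intro t _
    have h0 : f t 0 = 0 := by simp [f, ichoose_of_neg]
    rw [eq_sub_iff_add_eq, ← sum_range_succ, sum_range_succ', h0, add_zero, smul_sum]
    refine sum_congr rfl fun s _ => ?_
    rw [smul_smul]
    simp only [f]
    push_cast
    rw [show (t : ℤ) + (s + 1) - 1 = ((t + s : ℕ) : ℤ) by push_cast; ring,
      show (s : ℤ) + 1 - 1 = s by ring, show (t : ℤ) + (s + 1) - 2 = t + s - 1 by ring,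
      ichoose_natCast_s15, Nat.choose_symm_add, pow_succ]
    congr 1
    push_cast
    ring
  -- shifting `s ↦ s + 1` adds the term `s = N`, which survives only at `t = 0`
  have h_boundary : ∑ t ∈ range N, f t N = b ^ N • E ((N : ℤ) - 2) := by
    rw [sum_eq_single_of_mem 0 (mem_range.2 hN) fun t _ ht => ?_]
    · simp only [f]
      rw [show ((0 : ℕ) : ℤ) + N - 1 = ((N - 1 : ℕ) : ℤ) by omega,
        show (N : ℤ) - 1 = ((N - 1 : ℕ) : ℤ) by omega, ichoose_natCast_s15, Nat.choose_self]
      simp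
    · simp only [f]
      rw [hE _ (by omega), smul_zero]
  rw [zassenhausSum, sum_congr rfl h_shift, sum_sub_distrib, ← smul_sum, h_boundary,
    sum_range_sum_range_pow_mul_pow_choose_smul a b (fun m => E ((m : ℤ) - 1))
      fun m hm => hE _ (by omega)]

/-- With `N = p ^ n`, `E (-1), …, E (N - 2)` satisfy the defining relations of `W(1:n)`. -/
structure IsZassenhausFamily (R : Type*) {L : Type*} [CommRing R] [LieRing L]
    [LieAlgebra R L] (N : ℕ) (E : ℤ → L) : Prop where
  eq_zero : ∀ i : ℤ, i < -1 ∨ (N : ℤ) - 2 < i → E i = 0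
  lie_eq : ∀ i j : ℤ, -1 ≤ i → i ≤ (N : ℤ) - 2 → -1 ≤ j → j ≤ (N : ℤ) - 2 →
    ⁅E i, E j⁆ = ((ichoose (i + j + 1) j - ichoose (i + j + 1) i : ℤ) : R) • E (i + j)

namespace IsZassenhausFamily

variable {R L : Type*} [CommRing R] [LieRing L] [LieAlgebra R L] {N : ℕ} {E : ℤ → L}

theorem lie_zassenhausSum_top (hW : IsZassenhausFamily R N E) (hN : 2 ≤ N) (hNR : (N : R) = 0)
    (c : R) :
    ⁅zassenhausSum N E c, E ((N : ℤ) - 2)⁆ = E ((N : ℤ) - 3) - (2 * c) • E ((N : ℤ) - 2) := by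
  obtain ⟨k, rfl⟩ : ∃ k, N = k + 2 := ⟨N - 2, by omega⟩
  have h_high : ∀ t ∈ range k,
      ⁅c ^ (t + 1 + 1) • E (((t + 1 + 1 : ℕ) : ℤ) - 1), E ((k + 2 : ℕ) - 2)⁆ = 0 := by
    intro t ht
    have := mem_range.1 ht
    rw [smul_lie, hW.lie_eq _ _ (by omega) (by omega) (by omega) (by omega),
      hW.eq_zero _ (Or.inr (by omega)), smul_zero, smul_zero]
  rw [zassenhausSum, sum_lie, sum_range_succ', sum_range_succ', sum_eq_zero h_high, smul_lie,
    smul_lie, hW.lie_eq _ _ (by omega) (by omega) (by omega) (by omega),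
    hW.lie_eq _ _ (by omega) (by omega) (by omega) (by omega)]
  -- the coefficient of `E (N - 2)` is `C(N - 1, N - 2) - C(N - 1, 0) = N - 2 = -2` in `R`
  have hk : (k : R) = -2 := by push_cast at hNR; linear_combination hNR
  have h_succ_self : ichoose ((k : ℤ) + 1) k = k + 1 := by simpa using ichoose_natCast_s15 (k + 1) k
  have h_zero : ichoose ((k : ℤ) + 1) 0 = 1 := by simpa using ichoose_natCast_s15 (k + 1) 0
  have h_self : ichoose (k : ℤ) k = 1 := by simpa using ichoose_natCast_s15 k k
  norm_num
  rw [h_succ_self, h_zero, h_self, ichoose_of_neg _ (by norm_num : (-1 : ℤ) < 0),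
    show (k : ℤ) + 2 - 3 = -1 + k by ring]
  push_cast
  rw [hk]
  module

theorem lie_zassenhausSum_zassenhausSum (hW : IsZassenhausFamily R N E) (hN : 0 < N) {a b : R}
    (ha : a ^ N = a) (hb : b ^ N = b) :
    ⁅zassenhausSum N E a, zassenhausSum N E b⁆ =
      (b - a) • zassenhausSum N E (a + b) - (b - a) • E ((N : ℤ) - 2) := by
  have hE : ∀ i : ℤ, (N : ℤ) - 2 < i → E i = 0 := fun i hi => hW.eq_zero i (Or.inr hi)
  have h_left := sum_range_sum_range_ichoose_smul a b hN E hE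
  have h_right := sum_range_sum_range_ichoose_smul b a hN E hE
  rw [sum_comm] at h_right
  have h_expand : ⁅zassenhausSum N E a, zassenhausSum N E b⁆ =
      ∑ t ∈ range N, ∑ s ∈ range N,
          (a ^ t * b ^ s * (ichoose ((t : ℤ) + s - 1) ((s : ℤ) - 1) : R)) • E ((t : ℤ) + s - 2) -
        ∑ t ∈ range N, ∑ s ∈ range N,
          (b ^ s * a ^ t * (ichoose ((s : ℤ) + t - 1) ((t : ℤ) - 1) : R)) •
            E ((s : ℤ) + t - 2) := by
    rw [zassenhausSum, zassenhausSum, sum_lie_sum, ← sum_sub_distrib]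
    refine sum_congr rfl fun t ht => ?_
    rw [← sum_sub_distrib]
    refine sum_congr rfl fun s hs => ?_
    have := mem_range.1 ht
    have := mem_range.1 hs
    rw [smul_lie, lie_smul, hW.lie_eq _ _ (by omega) (by omega) (by omega) (by omega),
      show (t : ℤ) - 1 + (s - 1) + 1 = t + s - 1 by ring,
      show (t : ℤ) - 1 + (s - 1) = t + s - 2 by ring, add_comm (s : ℤ) t]
    push_cast
    module
  rw [h_expand, h_left, h_right, add_comm b a, ha, hb]
  module

theorem lie_top_add_zassenhausSum (hW : IsZassenhausFamily R N E) (hN : 2 ≤ N)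
    (hNR : (N : R) = 0) {a b : R} (ha : a ^ N = a) (hb : b ^ N = b) :
    ⁅E ((N : ℤ) - 2) + zassenhausSum N E a, E ((N : ℤ) - 2) + zassenhausSum N E b⁆ =
      (b - a) • (E ((N : ℤ) - 2) + zassenhausSum N E (a + b)) := by
  rw [lie_add, add_lie, add_lie, lie_self, ← lie_skew (E _), hW.lie_zassenhausSum_top hN hNR,
    hW.lie_zassenhausSum_top hN hNR, hW.lie_zassenhausSum_zassenhausSum (by omega) ha hb]
  module

end IsZassenhausFamily

theorem stmt_15_general (p n : ℕ)
    (Fq : Type*) [Field Fq] [Fintype Fq] (hq : Fintype.card Fq = p ^ n)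
    (F : Type*) [Field F] [Algebra Fq F]
    (L : Type*) [LieRing L] [LieAlgebra F L]
    -- `E i`, `i = -1, 0, …, p^n - 2`, is the standard basis of `W(1:n)`,
    -- with `E k = 0` outside this range
    (E : ℤ → L)
    (hE0 : ∀ i : ℤ, i < -1 ∨ (p : ℤ) ^ n - 2 < i → E i = 0)
    (hbr : ∀ i j : ℤ, -1 ≤ i → i ≤ (p : ℤ) ^ n - 2 → -1 ≤ j → j ≤ (p : ℤ) ^ n - 2 →
      ⁅E i, E j⁆ = ((ichoose (i + j + 1) j - ichoose (i + j + 1) i : ℤ) : F) • E (i + j))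
    -- the group basis `e_α = E_r + Σ_{i=-1}^{r} α^{i+1} • E_i`
    (e : Fq → L)
    (he : ∀ α : Fq, e α = E ((p : ℤ) ^ n - 2) +
      ∑ t ∈ Finset.range (p ^ n), (algebraMap Fq F α) ^ t • E ((t : ℤ) - 1)) :
    ∀ α β : Fq, ⁅e α, e β⁆ = algebraMap Fq F (β - α) • e (α + β) := by
  intro α β
  have hW : IsZassenhausFamily F (p ^ n) E := by
    constructor <;> rwa [Nat.cast_pow]
  have h_two : 2 ≤ p ^ n := hq ▸ Fintype.one_lt_card
  have h_char : ((p ^ n : ℕ) : F) = 0 := by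
    rw [← hq, ← map_natCast (algebraMap Fq F), FiniteField.cast_card_eq_zero, map_zero]
  have h_frob (γ : Fq) : algebraMap Fq F γ ^ p ^ n = algebraMap Fq F γ := by
    rw [← map_pow, ← hq, FiniteField.pow_card]
  have he' (γ : Fq) :
      e γ = E (((p ^ n : ℕ) : ℤ) - 2) + zassenhausSum (p ^ n) E (algebraMap Fq F γ) := by
    rw [he, zassenhausSum, Nat.cast_pow]
  rw [he', he', he', map_add, map_sub,
    hW.lie_top_add_zassenhausSum h_two h_char (h_frob α) (h_frob β)]

/-- In the Zassenhaus algebra `W(1:n)` over a field `F` containing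
`F_{p^n}`, setting `e_α = E_r + Σ_{i=-1}^r α^{i+1} E_i` (with `0^0 = 1`, `r = p^n - 2`)
one has `[e_α, e_β] = (β - α) e_{α+β}` for all `α, β ∈ F_{p^n}`. -/
theorem stmt_15 (p n : ℕ) (hp : p.Prime) (hn : 0 < n)
    (Fq : Type*) [Field Fq] [Fintype Fq] (hq : Fintype.card Fq = p ^ n)
    (F : Type*) [Field F] [Algebra Fq F]
    (L : Type*) [LieRing L] [LieAlgebra F L]
    -- `E i`, `i = -1, 0, …, p^n - 2`, is the standard basis of `W(1:n)`,
    -- with `E k = 0` outside this range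
    (E : ℤ → L)
    (hE0 : ∀ i : ℤ, i < -1 ∨ (p : ℤ) ^ n - 2 < i → E i = 0)
    (B : Module.Basis (Fin (p ^ n)) F L)
    (hB : ∀ t : Fin (p ^ n), B t = E ((t : ℤ) - 1))
    (hbr : ∀ i j : ℤ, -1 ≤ i → i ≤ (p : ℤ) ^ n - 2 → -1 ≤ j → j ≤ (p : ℤ) ^ n - 2 →
      ⁅E i, E j⁆ = ((ichoose (i + j + 1) j - ichoose (i + j + 1) i : ℤ) : F) • E (i + j))
    -- the group basis `e_α = E_r + Σ_{i=-1}^{r} α^{i+1} • E_i`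
    (e : Fq → L)
    (he : ∀ α : Fq, e α = E ((p : ℤ) ^ n - 2) +
      ∑ t ∈ Finset.range (p ^ n), (algebraMap Fq F α) ^ t • E ((t : ℤ) - 1)) :
    ∀ α β : Fq, ⁅e α, e β⁆ = algebraMap Fq F (β - α) • e (α + β) :=
  stmt_15_general p n Fq hq F L E hE0 hbr e he
end
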